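/- arXiv:2309.08055 — 7 statements merged into one kernel-verified Lean document; each statement's English description precedes it below -/
import Mathlib

section
/- Let a, b ∈ ℝⁿ and r > 0, and let E = B(a, r) ∪ B(b, r) be the union of two closed balls of radius r. Then the line segment [a, b] is an r-maximum distance minimizer of E; that is, E ⊆ B([a,b], r) and for every rectifiable curve Γ with E ⊆ B(Γ, r) one has H¹(Γ) ≥ H¹([a,b]) = |a − b|. -/
open MeasureTheory Metric Set ENNReal

/-- Closed `r`-neighborhood of a set. -/
def nbhd {n : ℕ} (A : Set (EuclideanSpace ℝ (Fin n))) (r : ℝ) :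
    Set (EuclideanSpace ℝ (Fin n)) :=
  {x | Metric.infDist x A ≤ r}

/-- A rectifiable curve: continuous image of `[0,1]` with finite `H¹` measure. -/
def IsRectCurve {n : ℕ} (Γ : Set (EuclideanSpace ℝ (Fin n))) : Prop :=
  (∃ f : ℝ → EuclideanSpace ℝ (Fin n),
      ContinuousOn f (Set.Icc 0 1) ∧ Γ = f '' Set.Icc 0 1) ∧
    μH[1] Γ < ⊤

/-- The value of the Maximum Distance Problem. -/
noncomputable def MDP {n : ℕ} (E : Set (EuclideanSpace ℝ (Fin n))) (r : ℝ) : ℝ≥0∞ :=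
  ⨅ (Γ : Set (EuclideanSpace ℝ (Fin n))) (_ : IsRectCurve Γ) (_ : E ⊆ nbhd Γ r), μH[1] Γ

/-- The segment `[a,b]` is an `r`-maximum distance minimizer of the union of the
two closed balls `B(a,r)` and `B(b,r)`. -/
theorem segment_is_minimizer {n : ℕ} (a b : EuclideanSpace ℝ (Fin n)) (r : ℝ) (hr : 0 < r) :
    (Metric.closedBall a r ∪ Metric.closedBall b r ⊆ nbhd (segment ℝ a b) r) ∧
    (∀ Γ : Set (EuclideanSpace ℝ (Fin n)), IsRectCurve Γ →
      Metric.closedBall a r ∪ Metric.closedBall b r ⊆ nbhd Γ r →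
      μH[1] (segment ℝ a b) ≤ μH[1] Γ) ∧
    μH[1] (segment ℝ a b) = ENNReal.ofReal (dist a b) := by
  have hseg : μH[1] (segment ℝ a b) = ENNReal.ofReal (dist a b) := by
    rw [hausdorffMeasure_segment, edist_dist]
  refine ⟨?_, ?_, hseg⟩
  · rintro x (hx | hx)
    · exact le_trans (Metric.infDist_le_dist_of_mem (left_mem_segment ℝ a b))
        (mem_closedBall.mp hx)
    · exact le_trans (Metric.infDist_le_dist_of_mem (right_mem_segment ℝ a b))
        (mem_closedBall.mp hx)
  · intro Γ hΓ hsub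
    rcases eq_or_ne a b with rfl | hab
    · have : μH[1] (segment ℝ a a) = 0 := by
        rw [hausdorffMeasure_segment]; simp
      rw [segment_same] at this; rw [segment_same, this]; exact zero_le
    obtain ⟨⟨f, hf, hΓeq⟩, _⟩ := hΓ
    have hcomp : IsCompact Γ := hΓeq ▸ (isCompact_Icc.image_of_continuousOn hf)
    have hconn : IsPreconnected Γ := hΓeq ▸ (isPreconnected_Icc.image f hf)
    have hne : Γ.Nonempty := hΓeq ▸ ⟨f 0, mem_image_of_mem f (by norm_num)⟩
    set u : EuclideanSpace ℝ (Fin n) := b - a with hu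
    have hun : 0 < ‖u‖ := by
      simpa [hu, sub_eq_zero] using (Ne.symm hab)
    set e : EuclideanSpace ℝ (Fin n) := ‖u‖⁻¹ • u with he
    have hne1 : ‖e‖ = 1 := by
      rw [he, norm_smul, norm_inv, Real.norm_eq_abs, abs_of_pos hun]
      field_simp
    set p : EuclideanSpace ℝ (Fin n) := a - r • e with hp
    set q : EuclideanSpace ℝ (Fin n) := b + r • e with hq
    have hpball : p ∈ Metric.closedBall a r := by
      rw [mem_closedBall, dist_eq_norm, hp, sub_sub_cancel_left, norm_neg, norm_smul,
        Real.norm_eq_abs, abs_of_pos hr, hne1, mul_one]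
    have hqball : q ∈ Metric.closedBall b r := by
      rw [mem_closedBall, dist_eq_norm, hq, add_sub_cancel_left, norm_smul,
        Real.norm_eq_abs, abs_of_pos hr, hne1, mul_one]
    obtain ⟨γ₁, hγ₁, hd1⟩ := hcomp.exists_infDist_eq_dist hne p
    obtain ⟨γ₂, hγ₂, hd2⟩ := hcomp.exists_infDist_eq_dist hne q
    have hd1' : dist p γ₁ ≤ r := hd1 ▸ hsub (Or.inl hpball)
    have hd2' : dist q γ₂ ≤ r := hd2 ▸ hsub (Or.inr hqball)
    set g : EuclideanSpace ℝ (Fin n) → ℝ := fun x => inner ℝ x e with hg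
    have hlip : LipschitzWith 1 g := by
      refine LipschitzWith.of_dist_le_mul fun x y => ?_
      rw [Real.dist_eq, dist_eq_norm, NNReal.coe_one, one_mul]
      calc |g x - g y| = |(inner ℝ (x - y) e : ℝ)| := by rw [hg]; simp [inner_sub_left]
        _ ≤ ‖x - y‖ * ‖e‖ := abs_real_inner_le_norm _ _
        _ = ‖x - y‖ := by rw [hne1, mul_one]
    -- inner product estimates
    have hue : (inner ℝ u e : ℝ) = ‖u‖ := by
      rw [he, real_inner_smul_right, real_inner_self_eq_norm_sq]
      field_simp
    have hqp : (inner ℝ (q - p) e : ℝ) = ‖u‖ + 2 * r := by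
      have : q - p = u + (2 * r) • e := by
        rw [hq, hp, hu]
        module
      rw [this, inner_add_left, real_inner_smul_left, hue, real_inner_self_eq_norm_sq, hne1]
      ring
    have h2 : |(inner ℝ (γ₂ - q) e : ℝ)| ≤ r := by
      calc |(inner ℝ (γ₂ - q) e : ℝ)| ≤ ‖γ₂ - q‖ * ‖e‖ := abs_real_inner_le_norm _ _
        _ = dist q γ₂ := by rw [hne1, mul_one, dist_comm, dist_eq_norm]
        _ ≤ r := hd2'
    have h1 : |(inner ℝ (p - γ₁) e : ℝ)| ≤ r := by
      calc |(inner ℝ (p - γ₁) e : ℝ)| ≤ ‖p - γ₁‖ * ‖e‖ := abs_real_inner_le_norm _ _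
        _ = dist p γ₁ := by rw [hne1, mul_one, dist_eq_norm]
        _ ≤ r := hd1'
    have hkey : ‖u‖ ≤ g γ₂ - g γ₁ := by
      have hdecomp : γ₂ - γ₁ = (γ₂ - q) + (q - p) + (p - γ₁) := by abel
      have : g γ₂ - g γ₁ = (inner ℝ (γ₂ - γ₁) e : ℝ) := by simp [hg, inner_sub_left]
      rw [this, hdecomp, inner_add_left, inner_add_left, hqp]
      have := abs_le.mp h1
      have := abs_le.mp h2
      linarith
    -- measure chain
    have himg : Set.Icc (g γ₁) (g γ₂) ⊆ g '' Γ :=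
      (hconn.image g hlip.continuous.continuousOn).Icc_subset
        (mem_image_of_mem g hγ₁) (mem_image_of_mem g hγ₂)
    have hvol : ENNReal.ofReal (dist a b) ≤ volume (g '' Γ) := by
      calc ENNReal.ofReal (dist a b) ≤ volume (Set.Icc (g γ₁) (g γ₂)) := by
            rw [Real.volume_Icc]
            apply ENNReal.ofReal_le_ofReal
            rw [dist_eq_norm, ← norm_neg]
            simpa [hu, neg_sub] using hkey
        _ ≤ volume (g '' Γ) := measure_mono himg
    have hH : volume (g '' Γ) ≤ μH[1] Γ := by
      rw [← MeasureTheory.hausdorffMeasure_real]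
      simpa using hlip.hausdorffMeasure_image_le (by norm_num : (0:ℝ) ≤ 1) Γ
    rw [hseg]
    exact le_trans hvol hH
end

section
/- Let E ⊂ ℝⁿ be a compact set and r > 0. Then Λ(B(E, r), r) ≥ diam(E), i.e., every rectifiable curve Γ whose closed r-neighborhood contains the closed r-neighborhood of E satisfies H¹(Γ) ≥ diam(E). -/
open MeasureTheory Metric Set ENNReal

/-- `Λ(B(E,r), r) ≥ diam E` for compact `E`. -/
theorem MDP_ge_diam {n : ℕ} (E : Set (EuclideanSpace ℝ (Fin n))) (hE : IsCompact E)
    (r : ℝ) (hr : 0 < r) :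
    EMetric.diam E ≤ MDP (nbhd E r) r := by
  refine le_iInf fun Γ => le_iInf fun hΓ => le_iInf fun hsub => ?_
  obtain ⟨⟨g, hg, hΓeq⟩, -⟩ := hΓ
  have hΓne : Γ.Nonempty := by
    rw [hΓeq]; exact (Set.nonempty_Icc.2 zero_le_one).image g
  have hΓcomp : IsCompact Γ := hΓeq ▸ isCompact_Icc.image_of_continuousOn hg
  have hΓconn : IsPreconnected Γ := hΓeq ▸ isPreconnected_Icc.image g hg
  refine EMetric.diam_le fun x hx y hy => ?_
  rcases eq_or_ne x y with rfl | hxy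
  · simp
  have hd : 0 < ‖x - y‖ := by rwa [norm_sub_pos_iff]
  set d := ‖x - y‖ with hd'
  set u : EuclideanSpace ℝ (Fin n) := d⁻¹ • (x - y) with hu
  have hun : ‖u‖ = 1 := by
    rw [hu, norm_smul, norm_inv, Real.norm_eq_abs, abs_of_pos hd]
    field_simp
    exact hd'.symm
  set f : EuclideanSpace ℝ (Fin n) → ℝ := fun z => inner ℝ z u with hf
  have hfc : Continuous f := Continuous.inner continuous_id continuous_const
  have hlip : LipschitzWith 1 f := by
    refine LipschitzWith.of_dist_le_mul fun a b => ?_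
    have : f a - f b = inner ℝ (a - b) u := by
      simp [hf, inner_sub_left]
    rw [Real.dist_eq, this, NNReal.coe_one, one_mul, dist_eq_norm]
    calc |(inner ℝ (a - b) u : ℝ)| ≤ ‖a - b‖ * ‖u‖ := abs_real_inner_le_norm _ _
      _ = ‖a - b‖ := by rw [hun, mul_one]
  have huu : (inner ℝ u u : ℝ) = 1 := by
    rw [real_inner_self_eq_norm_sq, hun]; norm_num
  have hfxy : f x - f y = d := by
    have : f x - f y = inner ℝ (x - y) u := by simp [hf, inner_sub_left]
    rw [this, hu, real_inner_smul_right, real_inner_self_eq_norm_sq]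
    field_simp [hd']
    ring
  -- the two witness points on Γ
  have key : ∀ z : EuclideanSpace ℝ (Fin n), Metric.infDist z E ≤ r →
      ∃ γ ∈ Γ, dist z γ ≤ r := by
    intro z hz
    have hz' : z ∈ nbhd Γ r := hsub hz
    obtain ⟨γ, hγΓ, hγ⟩ := hΓcomp.exists_infDist_eq_dist hΓne z
    exact ⟨γ, hγΓ, hγ ▸ hz'⟩
  have hru : ‖r • u‖ = r := by
    rw [norm_smul, hun, Real.norm_eq_abs, abs_of_pos hr, mul_one]
  obtain ⟨γ₁, hγ₁Γ, hγ₁⟩ := key (x + r • u) (by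
    refine le_trans (Metric.infDist_le_dist_of_mem hx) ?_
    rw [dist_eq_norm, add_sub_cancel_left, hru])
  obtain ⟨γ₂, hγ₂Γ, hγ₂⟩ := key (y - r • u) (by
    refine le_trans (Metric.infDist_le_dist_of_mem hy) ?_
    rw [dist_eq_norm, sub_sub_cancel_left, norm_neg, hru])
  have hfz1 : f (x + r • u) = f x + r := by
    show (inner ℝ (x + r • u) u : ℝ) = inner ℝ x u + r
    rw [inner_add_left, real_inner_smul_left, huu, mul_one]
  have hfz2 : f (y - r • u) = f y - r := by
    show (inner ℝ (y - r • u) u : ℝ) = inner ℝ y u - r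
    rw [inner_sub_left, real_inner_smul_left, huu, mul_one]
  have h1 : f x ≤ f γ₁ := by
    have := hlip.dist_le_mul (x + r • u) γ₁
    rw [Real.dist_eq, NNReal.coe_one, one_mul] at this
    have h := (abs_le.mp (this.trans hγ₁)).2
    rw [hfz1] at h; linarith
  have h2 : f γ₂ ≤ f y := by
    have := hlip.dist_le_mul (y - r • u) γ₂
    rw [Real.dist_eq, NNReal.coe_one, one_mul] at this
    have h := (abs_le.mp (this.trans hγ₂)).1
    rw [hfz2] at h; linarith
  have hIcc : Set.Icc (f γ₂) (f γ₁) ⊆ f '' Γ :=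
    (hΓconn.image f hfc.continuousOn).Icc_subset ⟨γ₂, hγ₂Γ, rfl⟩ ⟨γ₁, hγ₁Γ, rfl⟩
  calc edist x y = ENNReal.ofReal (dist x y) := edist_dist x y
    _ = ENNReal.ofReal (f x - f y) := by rw [dist_eq_norm, ← hd', ← hfxy]
    _ ≤ ENNReal.ofReal (f γ₁ - f γ₂) := ENNReal.ofReal_le_ofReal (by linarith)
    _ = volume (Set.Icc (f γ₂) (f γ₁)) := by rw [Real.volume_Icc]
    _ ≤ volume (f '' Γ) := measure_mono hIcc
    _ = μH[1] (f '' Γ) := by rw [MeasureTheory.hausdorffMeasure_real]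
    _ ≤ μH[1] Γ := by
        simpa using hlip.hausdorffMeasure_image_le zero_le_one Γ
end

section
/- Let 0 < α ≤ 1 and let γ : [0,1] → ℝⁿ be an α-Hölder curve with constant C_γ ≥ 1, i.e., |γ(x)−γ(y)| ≤ C_γ|x−y|^α for all x, y. Then there exists C = C(α, C_γ, n) > 0 such that Λ(B(γ([0,1]), r), r) ≤ C r^((α−1)/α) for all 0 < r < 1. -/
open MeasureTheory Metric Set ENNReal

/-!
Sample `γ` at `N ≈ (Cγ (4n+1) / r)^(1/α)` equally spaced times, so that consecutive samples, and
every point of the image, lie within `δ = r / (4n+1)` of a sample. Join the samples by a polygon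
that, at every sample, also runs out and back a distance `2√n δ` along each coordinate half-axis.
Its length is `O(N r) = O(r^((α-1)/α))`, and its `r`-neighbourhood still contains that of the
image: a point at distance `s ∈ (r, r + δ]` from its sample has a coordinate of size `≥ s/√n`
relative to it, and the spike in that direction lies within `r` of the point.
-/

lemma continuousOn_of_dist_le_mul_abs_sub_rpow {Y : Type*} [PseudoMetricSpace Y] {f : ℝ → Y}
    {s : Set ℝ} {C α : ℝ} (hC : 0 ≤ C) (hα : 0 < α)
    (hf : ∀ x ∈ s, ∀ y ∈ s, dist (f x) (f y) ≤ C * |x - y| ^ α) : ContinuousOn f s := by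
  have : HolderOnWith C.toNNReal α.toNNReal f s := fun x hx y hy => by
    rw [edist_dist, edist_dist, Real.dist_eq, Real.coe_toNNReal _ hα.le,
      ENNReal.ofReal_rpow_of_nonneg (abs_nonneg _) hα.le]
    exact (ENNReal.ofReal_le_ofReal (hf x hx y hy)).trans_eq (ENNReal.ofReal_mul hC)
  exact this.continuousOn (Real.toNNReal_pos.2 hα)

lemma exists_chain_of_dist_le {X : Type*} [PseudoMetricSpace X] {γ : ℝ → X} {N : ℕ} (hN : 0 < N)
    {δ : ℝ} (hγ : ∀ x ∈ Icc (0:ℝ) 1, ∀ y ∈ Icc (0:ℝ) 1, |x - y| ≤ (N:ℝ)⁻¹ → dist (γ x) (γ y) ≤ δ) :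
    ∃ c : ℕ → X, (∀ k, dist (c k) (c (k + 1)) ≤ δ) ∧
      ∀ t ∈ Icc (0:ℝ) 1, ∃ k ≤ N, dist (γ t) (c k) ≤ δ := by
  have hN' : (0:ℝ) < N := Nat.cast_pos.2 hN
  have hmem : ∀ k : ℕ, ((min k N : ℕ) : ℝ) / N ∈ Icc (0:ℝ) 1 := fun k =>
    ⟨by positivity, div_le_one_of_le₀ (by exact_mod_cast min_le_right k N) hN'.le⟩
  have hclose : ∀ a b : ℝ, |a - b| ≤ 1 → |a / N - b / N| ≤ (N:ℝ)⁻¹ := fun a b h => by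
    rw [← sub_div, abs_div, abs_of_pos hN', div_eq_mul_inv]
    exact mul_le_of_le_one_left (inv_nonneg.2 hN'.le) h
  refine ⟨fun k => γ (((min k N : ℕ) : ℝ) / N), fun k => hγ _ (hmem k) _ (hmem (k + 1)) ?_,
    fun t ht => ?_⟩
  · refine hclose _ _ (abs_le.2 ⟨?_, ?_⟩)
    · have : min (k + 1) N ≤ min k N + 1 := by omega
      have : ((min (k + 1) N : ℕ) : ℝ) ≤ (min k N : ℕ) + 1 := by exact_mod_cast this
      linarith
    · have : ((min k N : ℕ) : ℝ) ≤ (min (k + 1) N : ℕ) := by exact_mod_cast (by omega)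
      linarith
  · have hk : ⌊t * N⌋₊ ≤ N := Nat.floor_le_of_le (by nlinarith [ht.2])
    refine ⟨_, hk, hγ t ht _ (hmem _) ?_⟩
    rw [min_eq_left hk]
    have := hclose (t * N) ⌊t * N⌋₊ (abs_le.2
      ⟨by linarith [Nat.floor_le (mul_nonneg ht.1 hN'.le)],
        by linarith [Nat.lt_floor_add_one (t * N)]⟩)
    rwa [mul_div_cancel_right₀ _ hN'.ne'] at this

section Polygon

variable {E : Type*} [NormedAddCommGroup E] [NormedSpace ℝ E]

noncomputable def polygonalPath (p : ℕ → E) : (M : ℕ) → Path (p 0) (p M)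
  | 0 => Path.refl (p 0)
  | M + 1 => (polygonalPath p M).trans (Path.segment (p M) (p (M + 1)))

lemma mem_range_polygonalPath (p : ℕ → E) {m M : ℕ} (hm : m ≤ M) :
    p m ∈ range (polygonalPath p M) := by
  induction M with
  | zero => obtain rfl := Nat.le_zero.1 hm; exact ⟨0, Path.source _⟩
  | succ M ih =>
    rw [polygonalPath, Path.trans_range]
    rcases Nat.lt_succ_iff_lt_or_eq.1 (Nat.lt_succ_of_le hm) with hm | rfl
    · exact Or.inl (ih (Nat.lt_succ_iff.1 hm))
    · exact Or.inr ⟨1, Path.target _⟩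

lemma hausdorffMeasure_range_polygonalPath_le [MeasurableSpace E] [BorelSpace E]
    (p : ℕ → E) (M : ℕ) :
    μH[1] (range (polygonalPath p M)) ≤ ∑ m ∈ Finset.range M, edist (p m) (p (m + 1)) := by
  induction M with
  | zero =>
    have := Measure.nullSingletonClass_hausdorff E one_pos
    simp [polygonalPath, Path.refl_range]
  | succ M ih =>
    rw [polygonalPath, Path.trans_range, Finset.sum_range_succ, Path.range_segment,
      ← hausdorffMeasure_segment]
    exact (measure_union_le _ _).trans (add_le_add_left ih _)

end Polygon

lemma exists_isRectCurve_of_dist_succ_le {n : ℕ} (p : ℕ → EuclideanSpace ℝ (Fin n)) (M : ℕ)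
    {L : ℝ} (hp : ∀ m, dist (p m) (p (m + 1)) ≤ L) :
    ∃ Γ, IsRectCurve Γ ∧ (∀ m ≤ M, p m ∈ Γ) ∧ μH[1] Γ ≤ ENNReal.ofReal (M * L) := by
  have hlen : μH[1] (range (polygonalPath p M)) ≤ ENNReal.ofReal (M * L) :=
    calc μH[1] (range (polygonalPath p M))
        ≤ ∑ m ∈ Finset.range M, edist (p m) (p (m + 1)) :=
          hausdorffMeasure_range_polygonalPath_le p M
      _ ≤ ∑ _m ∈ Finset.range M, ENNReal.ofReal L :=
          Finset.sum_le_sum fun m _ => by rw [edist_dist]; exact ENNReal.ofReal_le_ofReal (hp m)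
      _ = ENNReal.ofReal (M * L) := by
          rw [Finset.sum_const, Finset.card_range, nsmul_eq_mul,
            ENNReal.ofReal_mul (Nat.cast_nonneg _), ENNReal.ofReal_natCast]
  refine ⟨range (polygonalPath p M), ⟨⟨(polygonalPath p M).extend,
    (Path.continuous_extend _).continuousOn, (Path.image_extend_of_subset _ subset_rfl).symm⟩,
    hlen.trans_lt ENNReal.ofReal_lt_top⟩, fun m hm => mem_range_polygonalPath p hm, hlen⟩

lemma MDP_le_of_subset_nbhd {n : ℕ} {E Γ : Set (EuclideanSpace ℝ (Fin n))} {r : ℝ}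
    (hΓ : IsRectCurve Γ) (hE : E ⊆ nbhd Γ r) : MDP E r ≤ μH[1] Γ :=
  iInf₂_le_of_le Γ hΓ (iInf_le _ hE)

section AxisStar

variable {n : ℕ}

lemma exists_norm_le_sqrt_mul_abs_apply {x : EuclideanSpace ℝ (Fin n)} (hx : x ≠ 0) :
    ∃ i, ‖x‖ ≤ √n * |x i| := by
  have : Nonempty (Fin n) := by
    by_contra h
    have := not_nonempty_iff.1 h
    exact hx (by ext i; exact isEmptyElim i)
  obtain ⟨i, -, hi⟩ := Finset.exists_max_image Finset.univ (fun j => |x j|) Finset.univ_nonempty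
  refine ⟨i, ?_⟩
  rw [EuclideanSpace.norm_eq, ← Real.sqrt_sq_eq_abs, ← Real.sqrt_mul (Nat.cast_nonneg _)]
  refine Real.sqrt_le_sqrt ?_
  calc ∑ j, ‖x j‖ ^ 2 ≤ ∑ _j : Fin n, x i ^ 2 := Finset.sum_le_sum fun j _ => by
        rw [Real.norm_eq_abs, ← sq_abs (x i)]
        exact pow_le_pow_left₀ (abs_nonneg _) (hi j (Finset.mem_univ _)) 2
    _ = n * x i ^ 2 := by simp

lemma exists_dist_add_smul_single_le {r δ : ℝ} (hδ : 0 < δ) (hr : (4 * n + 1) * δ = r)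
    {x c : EuclideanSpace ℝ (Fin n)} (hxc : dist x c ≤ r + δ) (hrxc : r < dist x c) :
    ∃ i a, |a| = 2 * √n * δ ∧ dist x (c + a • EuclideanSpace.single i 1) ≤ r := by
  have hr0 : 0 < r := hr ▸ by positivity
  have hu : ‖x - c‖ = dist x c := (dist_eq_norm x c).symm
  obtain ⟨i, hi⟩ := exists_norm_le_sqrt_mul_abs_apply (x := x - c)
    (norm_pos_iff.1 (by linarith))
  have hn : (1:ℝ) ≤ n := by exact_mod_cast i.pos
  obtain ⟨a, ha, hau⟩ : ∃ a, |a| = 2 * √n * δ ∧ a * (x - c) i = 2 * √n * δ * |(x - c) i| := by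
    rcases le_total 0 ((x - c) i) with h | h
    · exact ⟨2 * √n * δ, abs_of_nonneg (by positivity), by rw [abs_of_nonneg h]⟩
    · exact ⟨-(2 * √n * δ), by rw [abs_neg, abs_of_nonneg (by positivity)],
        by rw [abs_of_nonpos h]; ring⟩
  refine ⟨i, a, ha, (pow_le_pow_iff_left₀ (dist_nonneg (x := x)) hr0.le two_ne_zero).1 ?_⟩
  have hsq : dist x (c + a • EuclideanSpace.single i 1) ^ 2
      = dist x c ^ 2 - 2 * (a * (x - c) i) + a ^ 2 := by
    rw [dist_eq_norm, ← sub_sub, norm_sub_sq_real, inner_smul_right,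
      EuclideanSpace.inner_single_right, norm_smul, PiLp.norm_single, hu]
    simp
  have ha2 : a ^ 2 = r * δ - δ ^ 2 := by
    rw [← sq_abs, ha, ← hr, mul_pow, mul_pow, Real.sq_sqrt (Nat.cast_nonneg _)]
    ring
  have hau2 : 2 * δ * dist x c ≤ a * (x - c) i := by
    rw [hau, ← hu]
    calc 2 * δ * ‖x - c‖ ≤ 2 * δ * (√n * |(x - c) i|) := by gcongr
      _ = 2 * √n * δ * |(x - c) i| := by ring
  have h3δ : 0 ≤ r - 3 * δ := by nlinarith
  -- for `s = dist x c` the square is at most `s² - 4δs + rδ - δ²`, which is `≤ r²` on `(r, r + δ]`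
  rw [hsq]
  nlinarith [mul_nonneg (sub_nonneg.2 hxc) (dist_nonneg (x := x) (y := c)),
    mul_nonneg (sub_nonneg.2 hxc) h3δ, mul_pos hr0 hδ]

/-- For `j = 0, …, 4n` the offsets are `0, d e₀, 0, -d e₀, 0, d e₁, …, -d eₙ₋₁, 0`: a closed walk
from `0` out and back along every coordinate half-axis. -/
noncomputable def axisStarOffset (n : ℕ) (d : ℝ) (j : ℕ) : EuclideanSpace ℝ (Fin n) :=
  if h : j / 4 < n then
    (if j % 4 = 1 then d else if j % 4 = 3 then -d else 0) • EuclideanSpace.single ⟨j / 4, h⟩ 1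
  else 0

lemma norm_axisStarOffset_le {d : ℝ} (hd : 0 ≤ d) (j : ℕ) : ‖axisStarOffset n d j‖ ≤ d := by
  unfold axisStarOffset
  split_ifs <;> simp [norm_smul, PiLp.norm_single, abs_of_nonneg hd, hd]

lemma exists_axisStarOffset_eq {d a : ℝ} (ha : |a| = d) (i : Fin n) :
    ∃ j < 4 * n + 1, axisStarOffset n d j = a • EuclideanSpace.single i 1 := by
  have hi := i.2
  rcases (abs_eq (ha ▸ abs_nonneg a)).1 ha with rfl | rfl
  · refine ⟨4 * i + 1, by omega, ?_⟩
    have e : (4 * (i : ℕ) + 1) / 4 = i := by omega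
    have m : (4 * (i : ℕ) + 1) % 4 = 1 := by omega
    simp [axisStarOffset, e, m]
  · refine ⟨4 * i + 3, by omega, ?_⟩
    have e : (4 * (i : ℕ) + 3) / 4 = i := by omega
    have m : (4 * (i : ℕ) + 3) % 4 = 3 := by omega
    simp [axisStarOffset, e, m]

def ContainsAxisStar (Γ : Set (EuclideanSpace ℝ (Fin n))) (c : EuclideanSpace ℝ (Fin n))
    (d : ℝ) : Prop :=
  c ∈ Γ ∧ ∀ (i : Fin n) (a : ℝ), |a| = d → c + a • EuclideanSpace.single i 1 ∈ Γ

lemma exists_isRectCurve_containsAxisStar (c : ℕ → EuclideanSpace ℝ (Fin n)) (N : ℕ)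
    {δ d : ℝ} (hd : 0 ≤ d) (hc : ∀ k, dist (c k) (c (k + 1)) ≤ δ) :
    ∃ Γ, IsRectCurve Γ ∧ (∀ k ≤ N, ContainsAxisStar Γ (c k) d) ∧
      μH[1] Γ ≤ ENNReal.ofReal ((N + 1) * (4 * n + 1) * (δ + 2 * d)) := by
  set q := 4 * n + 1
  have hq : 0 < q := by omega
  set p : ℕ → EuclideanSpace ℝ (Fin n) := fun m => c (m / q) + axisStarOffset n d (m % q)
  have hp : ∀ k j, j < q → p (q * k + j) = c k + axisStarOffset n d j := fun k j hj => by
    simp only [p, Nat.mul_add_div hq, Nat.div_eq_of_lt hj, add_zero, Nat.mul_add_mod,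
      Nat.mod_eq_of_lt hj]
  have hstep : ∀ m, dist (p m) (p (m + 1)) ≤ δ + 2 * d := fun m => by
    have hcm : dist (c (m / q)) (c ((m + 1) / q)) ≤ δ := by
      rw [Nat.succ_div]
      split_ifs
      · exact hc _
      · simpa using dist_nonneg.trans (hc 0)
    calc dist (p m) (p (m + 1))
        ≤ dist (c (m / q)) (c ((m + 1) / q))
          + dist (axisStarOffset n d (m % q)) (axisStarOffset n d ((m + 1) % q)) :=
          dist_add_add_le _ _ _ _
      _ ≤ δ + (d + d) := add_le_add hcm ((dist_le_norm_add_norm _ _).trans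
          (add_le_add (norm_axisStarOffset_le hd _) (norm_axisStarOffset_le hd _)))
      _ = δ + 2 * d := by ring
  obtain ⟨Γ, hΓ, hpΓ, hlen⟩ := exists_isRectCurve_of_dist_succ_le p ((N + 1) * q) hstep
  have hmem : ∀ k ≤ N, ∀ j < q, c k + axisStarOffset n d j ∈ Γ := fun k hk j hj =>
    hp k j hj ▸ hpΓ _ (by nlinarith)
  refine ⟨Γ, hΓ, fun k hk => ⟨?_, fun i a ha => ?_⟩, ?_⟩
  · simpa [axisStarOffset] using hmem k hk 0 hq
  · obtain ⟨j, hj, hja⟩ := exists_axisStarOffset_eq ha i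
    exact hja ▸ hmem k hk j hj
  · convert hlen using 2
    simp only [q]
    push_cast
    ring

end AxisStar

lemma nbhd_subset_nbhd_of_containsAxisStar {n : ℕ} {F Γ : Set (EuclideanSpace ℝ (Fin n))}
    (hF : IsCompact F) (hFne : F.Nonempty) {r δ : ℝ} (hδ : 0 < δ) (hr : (4 * n + 1) * δ = r)
    (hFΓ : ∀ y ∈ F, ∃ z, ContainsAxisStar Γ z (2 * √n * δ) ∧ dist y z ≤ δ) :
    nbhd F r ⊆ nbhd Γ r := by
  intro x hx
  obtain ⟨y, hyF, hxy⟩ := hF.exists_infDist_eq_dist hFne x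
  obtain ⟨z, ⟨hzΓ, hstar⟩, hyz⟩ := hFΓ y hyF
  have hxz : dist x z ≤ r + δ :=
    (dist_triangle x y z).trans (add_le_add (hxy ▸ hx) hyz)
  rcases le_or_gt (dist x z) r with hle | hlt
  · exact (infDist_le_dist_of_mem hzΓ).trans hle
  · obtain ⟨i, a, ha, hdist⟩ := exists_dist_add_smul_single_le hδ hr hxz hlt
    exact (infDist_le_dist_of_mem (hstar i a ha)).trans hdist

lemma exists_nat_mul_inv_rpow_le {α K : ℝ} (hα : 0 < α) (hK : 1 ≤ K) :
    ∃ N : ℕ, 0 < N ∧ K * (N : ℝ)⁻¹ ^ α ≤ 1 ∧ (N : ℝ) + 1 ≤ 3 * K ^ α⁻¹ := by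
  have hβ : 1 ≤ K ^ α⁻¹ := Real.one_le_rpow hK (inv_nonneg.2 hα.le)
  have hN : 0 < ⌈K ^ α⁻¹⌉₊ := Nat.ceil_pos.2 (by linarith)
  have hN' : (0 : ℝ) < ⌈K ^ α⁻¹⌉₊ := Nat.cast_pos.2 hN
  refine ⟨⌈K ^ α⁻¹⌉₊, hN, ?_, by linarith [Nat.ceil_lt_add_one (by linarith : 0 ≤ K ^ α⁻¹)]⟩
  rw [Real.inv_rpow hN'.le, ← div_eq_mul_inv, div_le_one (by positivity)]
  calc K = (K ^ α⁻¹) ^ α := (Real.rpow_inv_rpow (by linarith) hα.ne').symm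
    _ ≤ (⌈K ^ α⁻¹⌉₊ : ℝ) ^ α := by gcongr; exact Nat.le_ceil _

lemma div_rpow_inv_mul_self {B r α : ℝ} (hB : 0 ≤ B) (hr : 0 < r) (hα : α ≠ 0) :
    (B / r) ^ α⁻¹ * r = B ^ α⁻¹ * r ^ ((α - 1) / α) := by
  rw [Real.div_rpow hB hr.le, show (α - 1) / α = 1 - α⁻¹ by field_simp,
    Real.rpow_sub hr, Real.rpow_one]
  ring

theorem holder_upper_bound_general {n : ℕ} (α : ℝ) (hα₀ : 0 < α)
    (Cγ : ℝ) (hC : 1 ≤ Cγ) (γ : ℝ → EuclideanSpace ℝ (Fin n))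
    (hγ : ∀ x ∈ Set.Icc (0:ℝ) 1, ∀ y ∈ Set.Icc (0:ℝ) 1,
      dist (γ x) (γ y) ≤ Cγ * |x - y| ^ α) :
    ∃ C : ℝ, 0 < C ∧ ∀ r : ℝ, 0 < r → r < 1 →
      MDP (nbhd (γ '' Set.Icc 0 1) r) r ≤ ENNReal.ofReal (C * r ^ ((α - 1) / α)) := by
  refine ⟨3 * (1 + 4 * √n) * (Cγ * (4 * n + 1)) ^ α⁻¹, by positivity, fun r hr hr1 => ?_⟩
  set δ := r / (4 * n + 1) with hδ_def
  have hδ : 0 < δ := by positivity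
  have hrδ : (4 * n + 1) * δ = r := mul_div_cancel₀ _ (by positivity)
  have hδr : δ ≤ r := div_le_self hr.le (by linarith [(Nat.cast_nonneg n : (0:ℝ) ≤ n)])
  obtain ⟨N, hN, hNδ, hN3⟩ :=
    exists_nat_mul_inv_rpow_le hα₀ (K := Cγ / δ) ((le_div_iff₀ hδ).2 (by linarith))
  have hstep : ∀ x ∈ Icc (0:ℝ) 1, ∀ y ∈ Icc (0:ℝ) 1, |x - y| ≤ (N : ℝ)⁻¹ →
      dist (γ x) (γ y) ≤ δ := fun x hx y hy hxy =>
    calc dist (γ x) (γ y) ≤ Cγ * |x - y| ^ α := hγ x hx y hy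
      _ ≤ Cγ * (N : ℝ)⁻¹ ^ α := by gcongr
      _ ≤ δ := by rwa [div_mul_eq_mul_div, div_le_one hδ] at hNδ
  obtain ⟨c, hc, hγc⟩ := exists_chain_of_dist_le hN hstep
  obtain ⟨Γ, hΓ, hstar, hlen⟩ :=
    exists_isRectCurve_containsAxisStar c N (d := 2 * √n * δ) (by positivity) hc
  have hcover : nbhd (γ '' Icc 0 1) r ⊆ nbhd Γ r :=
    nbhd_subset_nbhd_of_containsAxisStar
      (isCompact_Icc.image_of_continuousOn
        (continuousOn_of_dist_le_mul_abs_sub_rpow (by linarith) hα₀ hγ))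
      ⟨γ 0, mem_image_of_mem _ ⟨le_rfl, zero_le_one⟩⟩ hδ hrδ (by
        rintro _ ⟨t, ht, rfl⟩
        obtain ⟨k, hk, hdist⟩ := hγc t ht
        exact ⟨c k, hstar k hk, hdist⟩)
  refine (MDP_le_of_subset_nbhd hΓ hcover).trans (hlen.trans (ENNReal.ofReal_le_ofReal ?_))
  calc (N + 1) * (4 * n + 1) * (δ + 2 * (2 * √n * δ)) = (N + 1) * r * (1 + 4 * √n) := by
        rw [← hrδ]; ring
    _ ≤ 3 * (Cγ / δ) ^ α⁻¹ * r * (1 + 4 * √n) := by gcongr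
    _ = _ := by
        rw [hδ_def, div_div_eq_mul_div, mul_assoc 3, div_rpow_inv_mul_self (by positivity) hr
          hα₀.ne']
        ring

/-- Upper bound for the MDP value of neighborhoods of an α-Hölder curve. -/
theorem holder_upper_bound {n : ℕ} (α : ℝ) (hα₀ : 0 < α) (hα₁ : α ≤ 1)
    (Cγ : ℝ) (hC : 1 ≤ Cγ) (γ : ℝ → EuclideanSpace ℝ (Fin n))
    (hγ : ∀ x ∈ Set.Icc (0:ℝ) 1, ∀ y ∈ Set.Icc (0:ℝ) 1,
      dist (γ x) (γ y) ≤ Cγ * |x - y| ^ α) :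
    ∃ C : ℝ, 0 < C ∧ ∀ r : ℝ, 0 < r → r < 1 →
      MDP (nbhd (γ '' Set.Icc 0 1) r) r ≤ ENNReal.ofReal (C * r ^ ((α - 1) / α)) :=
  holder_upper_bound_general α hα₀ Cγ hC γ hγ
end

section
/- Let 0 < α ≤ β and let γ : [0,1] → ℝⁿ be an (α, β)-bi-Hölder curve with constant C_γ ≥ 1. Then there exists C = C(α, β, C_γ, n) such that (1/C) r^((β−1)/β) ≤ Λ(B(γ([0,1]), r), r) ≤ C r^((α−1)/α) for all sufficiently small r > 0 (depending only on β and C_γ). -/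
open MeasureTheory Metric Set ENNReal



lemma euclid_dist_sq {n : ℕ} (x p : EuclideanSpace ℝ (Fin n)) :
    dist x p ^ 2 = ∑ j, (x j - p j) ^ 2 := by
  rw [EuclideanSpace.dist_eq, Real.sq_sqrt (by positivity)]
  exact Finset.sum_congr rfl fun j _ => by rw [Real.dist_eq, sq_abs]

lemma quad_vertex {n : ℕ} (x p : EuclideanSpace ℝ (Fin n)) (s : ℝ) (i : Fin n) :
    dist x (p + s • EuclideanSpace.single i 1) ^ 2
      = dist x p ^ 2 - 2 * s * (x i - p i) + s ^ 2 := by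
  classical
  set y : EuclideanSpace ℝ (Fin n) := p + s • EuclideanSpace.single i 1 with hy
  rw [euclid_dist_sq, euclid_dist_sq]
  have hco : ∀ j : Fin n, (x j - y j) ^ 2
      = (x j - p j) ^ 2 + (if j = i then (s^2 - 2 * s * (x j - p j)) else 0) := by
    intro j
    have hj : y j = p j + s * (if j = i then 1 else 0) := by
      rw [hy]
      simp only [PiLp.add_apply, PiLp.smul_apply, smul_eq_mul, EuclideanSpace.single_apply]
    rw [hj]
    split_ifs <;> ring
  rw [Finset.sum_congr rfl (fun j _ => hco j), Finset.sum_add_distrib,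
    Finset.sum_ite_eq' Finset.univ i (fun j => s^2 - 2 * s * (x j - p j))]
  simp only [Finset.mem_univ, if_true]
  ring

lemma exists_polygon {n : ℕ} (q : ℕ → EuclideanSpace ℝ (Fin n)) (M : ℕ) :
    ∃ f : ℝ → EuclideanSpace ℝ (Fin n), Continuous f ∧ f 1 = q M ∧
      (∀ j ≤ M, q j ∈ f '' Set.Icc 0 1) ∧
      μH[1] (f '' Set.Icc 0 1) ≤
        ∑ j ∈ Finset.range M, ENNReal.ofReal (dist (q j) (q (j + 1))) := by
  induction M with
  | zero =>
    refine ⟨fun _ => q 0, continuous_const, rfl, ?_, ?_⟩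
    · intro j hj
      obtain rfl : j = 0 := Nat.le_zero.mp hj
      exact ⟨0, ⟨le_refl _, zero_le_one⟩, rfl⟩
    · have himg : (fun _ : ℝ => q 0) '' Set.Icc 0 1 = {q 0} := by
        exact Set.Nonempty.image_const (Set.nonempty_Icc.mpr zero_le_one) _
      rw [himg]
      haveI := MeasureTheory.Measure.noAtoms_hausdorff (EuclideanSpace ℝ (Fin n)) one_pos
      simp
  | succ M ih =>
    obtain ⟨f, hf, hf1, hmem, hmeas⟩ := ih
    classical
    set g : ℝ → EuclideanSpace ℝ (Fin n) := fun t =>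
      if t ≤ 1 / 2 then f (2 * t) else
        AffineMap.lineMap (q M) (q (M + 1)) (2 * t - 1) with hgdef
    have hg : Continuous g := by
      apply Continuous.if_le (hf.comp (by continuity))
        ((AffineMap.lineMap_continuous).comp (by continuity)) continuous_id continuous_const
      intro t ht
      simp only [id] at ht
      subst ht
      norm_num [hf1]
    have hg1 : g 1 = q (M + 1) := by
      simp only [hgdef]
      norm_num
    have himg : g '' Set.Icc 0 1 = f '' Set.Icc 0 1 ∪ segment ℝ (q M) (q (M + 1)) := by
      apply Set.Subset.antisymm
      · rintro _ ⟨t, ht, rfl⟩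
        by_cases h : t ≤ 1 / 2
        · left
          refine ⟨2 * t, ⟨by linarith [ht.1], by linarith⟩, ?_⟩
          simp only [hgdef]
          split_ifs
          rfl
        · right
          rw [segment_eq_image_lineMap]
          refine ⟨2 * t - 1, ⟨by linarith, by linarith [ht.2]⟩, ?_⟩
          simp only [hgdef]
          split_ifs
          rfl
      · apply Set.union_subset
        · rintro _ ⟨s, hs, rfl⟩
          refine ⟨s / 2, ⟨by linarith [hs.1], by linarith [hs.2]⟩, ?_⟩
          have h2 : s / 2 ≤ 1 / 2 := by linarith [hs.2]
          have h3 : 2 * (s / 2) = s := by ring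
          simp only [hgdef]
          split_ifs
          rw [h3]
        · rw [segment_eq_image_lineMap]
          rintro _ ⟨s, hs, rfl⟩
          refine ⟨(s + 1) / 2, ⟨by linarith [hs.1], by linarith [hs.2]⟩, ?_⟩
          simp only [hgdef]
          split_ifs with hcond
          · have hs0 : s = 0 := le_antisymm (by linarith) hs.1
            have h3 : 2 * ((s + 1) / 2) = 1 := by rw [hs0]; ring
            rw [h3, hf1, hs0]
            simp
          · have h3 : 2 * ((s + 1) / 2) - 1 = s := by ring
            rw [h3]
    refine ⟨g, hg, hg1, ?_, ?_⟩
    · intro j hj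
      rcases eq_or_lt_of_le hj with rfl | h
      · exact ⟨1, ⟨zero_le_one, le_refl _⟩, hg1⟩
      · rw [himg]
        exact Or.inl (hmem j (Nat.lt_succ_iff.mp h))
    · rw [himg, Finset.sum_range_succ]
      refine le_trans (measure_union_le _ _) (add_le_add hmeas ?_)
      rw [hausdorffMeasure_segment, edist_dist]

section Main

set_option maxHeartbeats 4000000 in
/-- Two-sided bounds for the MDP value of neighborhoods of an (α,β)-bi-Hölder curve. -/
theorem biHolder_bounds {n : ℕ} (α β : ℝ) (hα : 0 < α) (hαβ : α ≤ β)
    (Cγ : ℝ) (hC : 1 ≤ Cγ) (γ : ℝ → EuclideanSpace ℝ (Fin n))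
    (hγ : ∀ x ∈ Set.Icc (0:ℝ) 1, ∀ y ∈ Set.Icc (0:ℝ) 1,
      (1 / Cγ) * |x - y| ^ β ≤ dist (γ x) (γ y) ∧ dist (γ x) (γ y) ≤ Cγ * |x - y| ^ α) :
    ∃ C : ℝ, 0 < C ∧ ∃ r₀ : ℝ, 0 < r₀ ∧ ∀ r : ℝ, 0 < r → r < r₀ →
      ENNReal.ofReal (C⁻¹ * r ^ ((β - 1) / β)) ≤ MDP (nbhd (γ '' Set.Icc 0 1) r) r ∧
      MDP (nbhd (γ '' Set.Icc 0 1) r) r ≤ ENNReal.ofReal (C * r ^ ((α - 1) / α)) := by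
  have hβ : 0 < β := lt_of_lt_of_le hα hαβ
  have hCpos : 0 < Cγ := lt_of_lt_of_le one_pos hC
  have hn : 0 < n := by
    rcases Nat.eq_zero_or_pos n with hn0 | hn
    · exfalso
      subst hn0
      have h01 := (hγ 0 ⟨le_refl 0, zero_le_one⟩ 1 ⟨zero_le_one, le_refl 1⟩).1
      have hdist : dist (γ 0) (γ 1) = 0 := by
        rw [EuclideanSpace.dist_eq]
        simp
      rw [hdist] at h01
      have h2 : |(0:ℝ) - 1| ^ β = 1 := by
        norm_num
      rw [h2, mul_one] at h01
      have : (0:ℝ) < 1 / Cγ := by positivity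
      linarith
    · exact hn
  have hn1 : (1:ℝ) ≤ n := by exact_mod_cast hn
  set σ := Real.sqrt n with hσdef
  have hσsq : σ ^ 2 = n := Real.sq_sqrt (by positivity)
  have hσ1 : 1 ≤ σ := by nlinarith [Real.sqrt_nonneg (n:ℝ)]
  set Clow := (5 * Cγ) ^ (β⁻¹) with hClowdef
  set A := 5 * ((n:ℝ) + 1) * Cγ with hAdef
  set Cup := 3 * (4 * (n:ℝ) + 1) * (4 * σ + 1) * A ^ (α⁻¹) with hCupdef
  have hClowpos : 0 < Clow := Real.rpow_pos_of_pos (by positivity) _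
  have hCuppos : 0 < Cup := by positivity
  refine ⟨Clow + Cup, by positivity, 1 / (5 * Cγ), by positivity, ?_⟩
  intro r hr hrr
  have hr5 : 5 * Cγ * r < 1 := by
    have := (lt_div_iff₀ (by positivity : (0:ℝ) < 5 * Cγ)).mp hrr
    linarith
  constructor
  · -- Lower bound
    refine le_iInf fun Γ => le_iInf fun hΓ => le_iInf fun hcov => ?_
    obtain ⟨⟨f, hfc, hfΓ⟩, -⟩ := hΓ
    subst hfΓ
    set δ := (5 * Cγ * r) ^ (β⁻¹) with hδdef
    have hδpos : 0 < δ := Real.rpow_pos_of_pos (by positivity) _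
    have hδlt1 : δ < 1 := Real.rpow_lt_one (by positivity) hr5 (by positivity)
    have hδβ : δ ^ β = 5 * Cγ * r := by
      rw [hδdef, ← Real.rpow_mul (by positivity), inv_mul_cancel₀ (ne_of_gt hβ), Real.rpow_one]
    set N := ⌊1 / δ⌋₊ with hNdef
    have hinvδ : (1:ℝ) ≤ 1 / δ := by
      rw [le_div_iff₀ hδpos]; linarith
    have hN1 : 1 ≤ N := Nat.le_floor (by exact_mod_cast hinvδ)
    have hNδ : (N:ℝ) * δ ≤ 1 := by
      have h1 : (N:ℝ) ≤ 1/δ := Nat.floor_le (by positivity)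
      calc (N:ℝ) * δ ≤ (1/δ) * δ := mul_le_mul_of_nonneg_right h1 hδpos.le
        _ = 1 := by field_simp
    have hmem01 : ∀ k : ℕ, k ≤ N → (k:ℝ) * δ ∈ Set.Icc (0:ℝ) 1 := by
      intro k hk
      refine ⟨by positivity, ?_⟩
      have h1 : (k:ℝ) ≤ N := Nat.cast_le.mpr hk
      calc (k:ℝ) * δ ≤ (N:ℝ) * δ := mul_le_mul_of_nonneg_right h1 hδpos.le
        _ ≤ 1 := hNδ
    have hΓcomp : IsCompact (f '' Set.Icc 0 1) := isCompact_Icc.image_of_continuousOn hfc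
    have hΓne : (f '' Set.Icc 0 1).Nonempty := ⟨f 0, 0, ⟨le_refl _, zero_le_one⟩, rfl⟩
    have hΓconn : IsPreconnected (f '' Set.Icc 0 1) := isPreconnected_Icc.image f hfc
    have hnear : ∀ k : ℕ, k ≤ N → ∃ y ∈ f '' Set.Icc 0 1, dist (γ ((k:ℝ)*δ)) y ≤ r := by
      intro k hk
      have hx : γ ((k:ℝ)*δ) ∈ nbhd (γ '' Set.Icc 0 1) r := by
        show infDist _ _ ≤ r
        rw [infDist_zero_of_mem (Set.mem_image_of_mem γ (hmem01 k hk))]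
        exact hr.le
      have h2 := hcov hx
      obtain ⟨y, hy, hyd⟩ := hΓcomp.exists_infDist_eq_dist hΓne (γ ((k:ℝ)*δ))
      exact ⟨y, hy, by rw [← hyd]; exact h2⟩
    choose y hyΓ hyr using hnear
    have hsep : ∀ i, i ≤ N → ∀ j, j ≤ N → i ≠ j →
        5 * r ≤ dist (γ ((i:ℝ)*δ)) (γ ((j:ℝ)*δ)) := by
      intro i hi j hj hij
      have h1 : (1:ℝ) ≤ |(i:ℝ) - (j:ℝ)| := by
        have hz : 1 ≤ |(i:ℤ) - (j:ℤ)| := Int.one_le_abs (by omega)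
        have h2 : ((|(i:ℤ) - (j:ℤ)| : ℤ) : ℝ) = |(i:ℝ) - (j:ℝ)| := by push_cast; ring_nf
        exact_mod_cast h2 ▸ (by exact_mod_cast hz : ((1:ℤ):ℝ) ≤ ((|(i:ℤ) - (j:ℤ)| : ℤ) : ℝ))
      have h2 : δ ≤ |(i:ℝ)*δ - (j:ℝ)*δ| := by
        rw [← sub_mul, abs_mul, abs_of_pos hδpos]
        nlinarith
      have h3 := (hγ _ (hmem01 i hi) _ (hmem01 j hj)).1
      have h4 : δ ^ β ≤ |(i:ℝ)*δ - (j:ℝ)*δ| ^ β := Real.rpow_le_rpow hδpos.le h2 hβ.le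
      have h5 : (1/Cγ) * (δ ^ β) ≤ (1/Cγ) * |(i:ℝ)*δ - (j:ℝ)*δ| ^ β :=
        mul_le_mul_of_nonneg_left h4 (by positivity)
      have h6 : (1/Cγ) * (δ ^ β) = 5 * r := by rw [hδβ]; field_simp
      linarith
    set Ann : ℕ → Set (EuclideanSpace ℝ (Fin n)) :=
      fun i => {z | dist (γ ((i:ℝ)*δ)) z ∈ Set.Icc r (2*r)} with hAnndef
    have hAnnMeas : ∀ i, MeasurableSet (Ann i) := by
      intro i
      exact (continuous_const.dist continuous_id).measurable measurableSet_Icc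
    have hAnnBound : ∀ i, i ≤ N → ENNReal.ofReal r ≤ μH[1] (Ann i ∩ f '' Set.Icc 0 1) := by
      intro i hi
      set j := if i = 0 then 1 else 0 with hjdef
      have hjN : j ≤ N := by rw [hjdef]; split_ifs; exacts [hN1, Nat.zero_le N]
      have hij : i ≠ j := by rw [hjdef]; split_ifs with hh; · omega
                             · exact hh
      have ha := hyr i hi
      have hb := hyr j hjN
      have hfb : 4 * r ≤ dist (γ ((i:ℝ)*δ)) (y j hjN) := by
        have hs := hsep i hi j hjN hij
        have h1 := dist_triangle (γ ((i:ℝ)*δ)) (y j hjN) (γ ((j:ℝ)*δ))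
        have h2 : dist (y j hjN) (γ ((j:ℝ)*δ)) ≤ r := by rw [dist_comm]; exact hb
        linarith [hs, h1, h2]
      have hIcc : Set.Icc r (2*r) ⊆ (dist (γ ((i:ℝ)*δ))) '' (f '' Set.Icc 0 1) := by
        refine Set.Subset.trans (Set.Icc_subset_Icc ?_ ?_)
          (hΓconn.intermediate_value (hyΓ i hi) (hyΓ j hjN)
            ((continuous_const.dist continuous_id).continuousOn))
        · show dist (γ ((i:ℝ)*δ)) (y i hi) ≤ r
          exact ha
        · show 2*r ≤ dist (γ ((i:ℝ)*δ)) (y j hjN)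
          linarith
      have hIcc2 : Set.Icc r (2*r) ⊆
          (dist (γ ((i:ℝ)*δ))) '' (Ann i ∩ f '' Set.Icc 0 1) := by
        intro t ht
        obtain ⟨z, hz, hzt⟩ := hIcc ht
        refine ⟨z, ⟨?_, hz⟩, hzt⟩
        have hzt' : dist (γ ((i:ℝ)*δ)) z = t := hzt
        show dist (γ ((i:ℝ)*δ)) z ∈ Set.Icc r (2*r)
        rw [hzt']; exact ht
      calc ENNReal.ofReal r = μH[1] (Set.Icc r (2*r) : Set ℝ) := by
            rw [MeasureTheory.hausdorffMeasure_real, Real.volume_Icc]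
            congr 1
            ring
        _ ≤ μH[1] ((dist (γ ((i:ℝ)*δ))) '' (Ann i ∩ f '' Set.Icc 0 1)) :=
            measure_mono hIcc2
        _ ≤ μH[1] (Ann i ∩ f '' Set.Icc 0 1) := by
            have hl := (LipschitzWith.dist_right (γ ((i:ℝ)*δ))).hausdorffMeasure_image_le
              zero_le_one (Ann i ∩ f '' Set.Icc 0 1)
            rw [ENNReal.coe_one, ENNReal.one_rpow, one_mul] at hl
            exact hl
    have hdisj : (↑(Finset.range (N+1)) : Set ℕ).PairwiseDisjoint Ann := by
      intro i hi j hj hij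
      simp only [Finset.coe_range, Set.mem_Iio] at hi hj
      show Disjoint (Ann i) (Ann j)
      rw [Set.disjoint_left]
      intro z hzi hzj
      have h1 : dist (γ ((i:ℝ)*δ)) z ≤ 2*r := hzi.2
      have h2 : dist (γ ((j:ℝ)*δ)) z ≤ 2*r := hzj.2
      have hs := hsep i (by omega) j (by omega) hij
      have h3 := dist_triangle (γ ((i:ℝ)*δ)) z (γ ((j:ℝ)*δ))
      rw [dist_comm z (γ ((j:ℝ)*δ))] at h3
      linarith
    have hsum : ENNReal.ofReal (((N:ℝ)+1) * r) ≤ μH[1] (f '' Set.Icc 0 1) := by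
      have h1 : ∑ i ∈ Finset.range (N+1), ENNReal.ofReal r ≤
          ∑ i ∈ Finset.range (N+1), (μH[1]).restrict (f '' Set.Icc 0 1) (Ann i) := by
        apply Finset.sum_le_sum
        intro i hi
        rw [Measure.restrict_apply (hAnnMeas i)]
        exact hAnnBound i (Nat.lt_succ_iff.mp (Finset.mem_range.mp hi))
      have h2 := MeasureTheory.measure_biUnion_finset (μ := (μH[1]).restrict (f '' Set.Icc 0 1))
        hdisj (fun i _ => hAnnMeas i)
      calc ENNReal.ofReal (((N:ℝ)+1)*r)
          = ∑ _i ∈ Finset.range (N+1), ENNReal.ofReal r := by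
            rw [Finset.sum_const, Finset.card_range, nsmul_eq_mul,
              ← ENNReal.ofReal_natCast (N+1), ← ENNReal.ofReal_mul (by positivity)]
            push_cast
            try ring_nf
        _ ≤ ∑ i ∈ Finset.range (N+1), (μH[1]).restrict (f '' Set.Icc 0 1) (Ann i) := h1
        _ = (μH[1]).restrict (f '' Set.Icc 0 1) (⋃ i ∈ Finset.range (N+1), Ann i) := h2.symm
        _ ≤ (μH[1]).restrict (f '' Set.Icc 0 1) Set.univ := measure_mono (Set.subset_univ _)
        _ = μH[1] (f '' Set.Icc 0 1) := by rw [Measure.restrict_apply_univ]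
    refine le_trans ?_ hsum
    apply ENNReal.ofReal_le_ofReal
    have hrpow_pos : 0 < r ^ ((β-1)/β) := Real.rpow_pos_of_pos hr _
    have hNd : 1/δ ≤ (N:ℝ)+1 := le_of_lt (Nat.lt_floor_add_one _)
    have hδsplit : δ = Clow * r ^ (β⁻¹) := by
      rw [hδdef, hClowdef, ← Real.mul_rpow (by positivity) hr.le]
    have hrpowβ : r ^ (β⁻¹) * r ^ ((β-1)/β) = r := by
      rw [← Real.rpow_add hr, show β⁻¹ + (β-1)/β = 1 by field_simp; ring, Real.rpow_one]
    have h7 : Clow⁻¹ * r ^ ((β-1)/β) = r / δ := by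
      rw [hδsplit, eq_div_iff (by positivity : Clow * r ^ (β⁻¹) ≠ 0)]
      calc Clow⁻¹ * r ^ ((β-1)/β) * (Clow * r ^ (β⁻¹))
          = (Clow⁻¹ * Clow) * (r ^ (β⁻¹) * r ^ ((β-1)/β)) := by ring
        _ = r := by rw [inv_mul_cancel₀ (ne_of_gt hClowpos), one_mul, hrpowβ]
    have h6 : (Clow+Cup)⁻¹ * r ^ ((β-1)/β) ≤ Clow⁻¹ * r ^ ((β-1)/β) := by
      apply mul_le_mul_of_nonneg_right _ hrpow_pos.le
      apply inv_anti₀ hClowpos (by linarith)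
    have h8 : r / δ ≤ ((N:ℝ)+1) * r := by
      rw [div_le_iff₀ hδpos]
      calc r = (1/δ) * (r * δ) := by field_simp
        _ ≤ ((N:ℝ)+1) * (r * δ) := mul_le_mul_of_nonneg_right hNd (by positivity)
        _ = ((N:ℝ)+1) * r * δ := by ring
    exact le_trans h6 (le_trans (le_of_eq h7) h8)
  · -- Upper bound
    set ε := r / (5 * ((n:ℝ)+1)) with hεdef
    have hεpos : 0 < ε := by positivity
    have hApos : (0:ℝ) < A := by positivity
    have hrA : 0 < r / A := by positivity
    have hr1 : r < 1 := by
      have h5 : (1:ℝ)/(5*Cγ) ≤ 1 := by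
        rw [div_le_one (by positivity)]; linarith
      linarith
    have hrA1 : r / A ≤ 1 := by
      rw [div_le_one hApos]
      have : (5:ℝ) ≤ A := by rw [hAdef]; nlinarith
      linarith
    set h := (r / A) ^ (α⁻¹) with hhdef
    have hhpos : 0 < h := Real.rpow_pos_of_pos hrA _
    have hh1 : h ≤ 1 := Real.rpow_le_one hrA.le hrA1 (by positivity)
    have hhα : h ^ α = r / A := by
      rw [hhdef, ← Real.rpow_mul hrA.le, inv_mul_cancel₀ hα.ne', Real.rpow_one]
    set L := 2 * σ * ε with hLdef
    have hLpos : 0 < L := by positivity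
    set m := ⌈1 / h⌉₊ with hmdef
    set B := 4 * n + 1 with hBdef
    have hBpos : 0 < B := by omega
    set M := (m + 1) * B with hMdef
    set p : ℕ → EuclideanSpace ℝ (Fin n) := fun k => γ (min ((k:ℝ) * h) 1) with hpdef
    set e : Fin n → EuclideanSpace ℝ (Fin n) := fun i => EuclideanSpace.single i 1 with hedef
    set q : ℕ → EuclideanSpace ℝ (Fin n) := fun j =>
      if j % B = 0 then p (j / B)
      else if (j % B - 1) % 4 = 0 then p (j / B) + L • e ⟨(j % B - 1) / 4 % n, Nat.mod_lt _ hn⟩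
      else if (j % B - 1) % 4 = 2 then p (j / B) - L • e ⟨(j % B - 1) / 4 % n, Nat.mod_lt _ hn⟩
      else p (j / B) with hqdef
    obtain ⟨F, hFc, hF1, hFmem, hFmeas⟩ := exists_polygon q M
    set Γ := F '' Set.Icc 0 1 with hΓdef
    -- vertex identification
    have hqp : ∀ k : ℕ, q (k * B) = p k := by
      intro k
      have h1 : k * B % B = 0 := Nat.mul_mod_left k B
      have h2 : k * B / B = k := Nat.mul_div_cancel k hBpos
      rw [hqdef]
      simp [h1, h2]
    have hqplus : ∀ k : ℕ, ∀ i : Fin n, q (k * B + (4 * i.val + 1)) = p k + L • e i := by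
      intro k i
      have hiB : 4 * i.val + 1 < B := by have := i.isLt; omega
      have h1 : (k * B + (4 * i.val + 1)) % B = 4 * i.val + 1 := by
        rw [show k * B + (4 * i.val + 1) = B * k + (4 * i.val + 1) by ring,
          Nat.mul_add_mod, Nat.mod_eq_of_lt hiB]
      have h2 : (k * B + (4 * i.val + 1)) / B = k := by
        rw [show k * B + (4 * i.val + 1) = B * k + (4 * i.val + 1) by ring,
          Nat.mul_add_div hBpos, Nat.div_eq_of_lt hiB, Nat.add_zero]
      rw [hqdef]
      simp only [h1, h2]
      have h3 : (4 * i.val + 1 - 1) % 4 = 0 := by omega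
      have h4 : (4 * i.val + 1 - 1) / 4 % n = i.val := by
        have : (4 * i.val + 1 - 1) / 4 = i.val := by omega
        rw [this, Nat.mod_eq_of_lt i.isLt]
      have h5 : (⟨(4 * i.val + 1 - 1) / 4 % n, Nat.mod_lt _ hn⟩ : Fin n) = i := by
        rw [Fin.ext_iff]
        exact h4
      rw [if_neg (by omega), if_pos h3, h5]
    have hqminus : ∀ k : ℕ, ∀ i : Fin n, q (k * B + (4 * i.val + 3)) = p k - L • e i := by
      intro k i
      have hiB : 4 * i.val + 3 < B + 2 := by have := i.isLt; omega
      have hiB' : 4 * i.val + 3 ≤ B := by have := i.isLt; omega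
      rcases Nat.lt_or_ge (4 * i.val + 3) B with hlt | hge
      · have h1 : (k * B + (4 * i.val + 3)) % B = 4 * i.val + 3 := by
          rw [show k * B + (4 * i.val + 3) = B * k + (4 * i.val + 3) by ring,
            Nat.mul_add_mod, Nat.mod_eq_of_lt hlt]
        have h2 : (k * B + (4 * i.val + 3)) / B = k := by
          rw [show k * B + (4 * i.val + 3) = B * k + (4 * i.val + 3) by ring,
            Nat.mul_add_div hBpos, Nat.div_eq_of_lt hlt, Nat.add_zero]
        rw [hqdef]
        simp only [h1, h2]
        have h3 : (4 * i.val + 3 - 1) % 4 = 2 := by omega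
        have h4 : (4 * i.val + 3 - 1) / 4 % n = i.val := by
          have : (4 * i.val + 3 - 1) / 4 = i.val := by omega
          rw [this, Nat.mod_eq_of_lt i.isLt]
        have h5 : (⟨(4 * i.val + 3 - 1) / 4 % n, Nat.mod_lt _ hn⟩ : Fin n) = i := by
          rw [Fin.ext_iff]
          exact h4
        rw [if_neg (by omega), if_neg (by omega), if_pos h3, h5]
      ·
        exfalso
        have := i.isLt
        omega
    -- edge length bound
    have hqnear : ∀ j : ℕ, dist (q j) (p (j / B)) ≤ L := by
      intro j
      rw [hqdef]
      simp only []
      split_ifs with h1 h2 h3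
      · simp [dist_self, hLpos.le]
      · rw [dist_eq_norm, add_sub_cancel_left, norm_smul]
        simp only [hedef]
        rw [EuclideanSpace.norm_single]
        simp [abs_of_pos hLpos]
      · have hv : p (j/B) - L • e ⟨(j % B - 1) / 4 % n, Nat.mod_lt _ hn⟩ - p (j/B)
            = -(L • e ⟨(j % B - 1) / 4 % n, Nat.mod_lt _ hn⟩) := by abel
        rw [dist_eq_norm, hv, norm_neg, norm_smul]
        simp only [hedef]
        rw [EuclideanSpace.norm_single]
        simp [abs_of_pos hLpos]
      · simp [dist_self, hLpos.le]
    have hCγh : Cγ * h ^ α = ε := by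
      rw [hhα, hεdef, hAdef]
      field_simp
    have hmin01 : ∀ k : ℕ, min ((k:ℝ) * h) 1 ∈ Set.Icc (0:ℝ) 1 :=
      fun k => ⟨le_min (by positivity) zero_le_one, min_le_right _ _⟩
    have hpstep : ∀ k : ℕ, dist (p k) (p (k+1)) ≤ ε := by
      intro k
      rw [hpdef]
      simp only []
      push_cast
      set a := min ((k:ℝ)*h) 1 with hadef
      set b := min (((k:ℝ)+1)*h) 1 with hbdef
      have hab : |a - b| ≤ h := by
        rw [hadef, hbdef]
        rcases le_total ((k:ℝ)*h) 1 with hc1 | hc1 <;>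
          rcases le_total (((k:ℝ)+1)*h) 1 with hc2 | hc2
        · rw [min_eq_left hc1, min_eq_left hc2, abs_le]
          constructor <;> nlinarith
        · rw [min_eq_left hc1, min_eq_right hc2, abs_le]
          constructor <;> nlinarith
        · rw [min_eq_right hc1, min_eq_left hc2, abs_le]
          constructor <;> nlinarith
        · rw [min_eq_right hc1, min_eq_right hc2, abs_le]
          constructor <;> nlinarith
      have ha01 : a ∈ Set.Icc (0:ℝ) 1 :=
        ⟨le_min (by positivity) zero_le_one, min_le_right _ _⟩
      have hb01 : b ∈ Set.Icc (0:ℝ) 1 :=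
        ⟨le_min (by positivity) zero_le_one, min_le_right _ _⟩
      have h3 := (hγ a ha01 b hb01).2
      have h5 : |a - b| ^ α ≤ h ^ α := Real.rpow_le_rpow (abs_nonneg _) hab hα.le
      calc dist (γ a) (γ b) ≤ Cγ * |a-b| ^ α := h3
        _ ≤ Cγ * h ^ α := mul_le_mul_of_nonneg_left h5 hCpos.le
        _ = ε := hCγh
    have hedge : ∀ j : ℕ, dist (q j) (q (j+1)) ≤ 2 * L + ε := by
      intro j
      have hk1 : (j+1)/B = j/B ∨ (j+1)/B = j/B + 1 := by
        have h1 : j / B ≤ (j+1)/B := Nat.div_le_div_right (Nat.le_succ j)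
        have h2 : (j+1)/B ≤ j/B + 1 := by
          have h3 : (j+1) ≤ j + B := by omega
          have h4 := Nat.div_le_div_right (c := B) h3
          rw [Nat.add_div_right j hBpos] at h4
          exact h4
        omega
      have ha := hqnear j
      have hb := hqnear (j+1)
      have hc : dist (p (j/B)) (p ((j+1)/B)) ≤ ε := by
        rcases hk1 with h | h
        · rw [h]; simp [dist_self, hεpos.le]
        · rw [h]; exact hpstep _
      have hb' : dist (p ((j+1)/B)) (q (j+1)) ≤ L := by rw [dist_comm]; exact hb
      calc dist (q j) (q (j+1))
          ≤ dist (q j) (p (j/B)) + dist (p (j/B)) (p ((j+1)/B)) + dist (p ((j+1)/B)) (q (j+1)) :=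
            dist_triangle4 _ _ _ _
        _ ≤ L + ε + L := by linarith [ha, hc, hb']
        _ = 2*L + ε := by ring
    have hsum1 : μH[1] Γ ≤ ENNReal.ofReal ((M:ℝ) * (2*L+ε)) := by
      refine le_trans hFmeas ?_
      calc ∑ j ∈ Finset.range M, ENNReal.ofReal (dist (q j) (q (j+1)))
          ≤ ∑ _j ∈ Finset.range M, ENNReal.ofReal (2*L+ε) :=
            Finset.sum_le_sum (fun j _ => ENNReal.ofReal_le_ofReal (hedge j))
        _ = M • ENNReal.ofReal (2*L+ε) := by rw [Finset.sum_const, Finset.card_range]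
        _ = ENNReal.ofReal ((M:ℝ) * (2*L+ε)) := by
            rw [nsmul_eq_mul, ← ENNReal.ofReal_natCast M,
              ← ENNReal.ofReal_mul (Nat.cast_nonneg M)]
    have hrect : IsRectCurve Γ :=
      ⟨⟨F, hFc.continuousOn, hΓdef⟩, lt_of_le_of_lt hsum1 ENNReal.ofReal_lt_top⟩
    -- continuity of γ
    have hγcont : ContinuousOn γ (Set.Icc 0 1) := by
      have hhold : HolderOnWith Cγ.toNNReal α.toNNReal γ (Set.Icc 0 1) := by
        intro x hx y hy
        calc edist (γ x) (γ y) = ENNReal.ofReal (dist (γ x) (γ y)) := edist_dist _ _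
          _ ≤ ENNReal.ofReal (Cγ * |x-y|^α) := ENNReal.ofReal_le_ofReal (hγ x hx y hy).2
          _ = ENNReal.ofReal Cγ * ENNReal.ofReal (|x-y|^α) := ENNReal.ofReal_mul hCpos.le
          _ = (Cγ.toNNReal : ℝ≥0∞) * ENNReal.ofReal |x-y| ^ (α.toNNReal : ℝ) := by
              rw [← ENNReal.ofReal_rpow_of_nonneg (abs_nonneg _) hα.le]
              congr 2
              rw [Real.coe_toNNReal _ hα.le]
          _ = (Cγ.toNNReal : ℝ≥0∞) * edist x y ^ (α.toNNReal : ℝ) := by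
              rw [edist_dist, Real.dist_eq]
      exact hhold.continuousOn (Real.toNNReal_pos.mpr hα)
    have himgcomp : IsCompact (γ '' Set.Icc 0 1) := isCompact_Icc.image_of_continuousOn hγcont
    have himgne : (γ '' Set.Icc 0 1).Nonempty := ⟨γ 0, 0, ⟨le_refl _, zero_le_one⟩, rfl⟩
    -- covering
    have hcover : nbhd (γ '' Set.Icc 0 1) r ⊆ nbhd Γ r := by
      intro x hx
      obtain ⟨z, hz, hzd⟩ := himgcomp.exists_infDist_eq_dist himgne x
      have hxz : dist x z ≤ r := by rw [← hzd]; exact hx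
      obtain ⟨t, ht, rfl⟩ := hz
      set k := ⌊t / h⌋₊ with hkdef
      have hk0 : (k:ℝ) * h ≤ t := by
        have h1 : (k:ℝ) ≤ t/h := Nat.floor_le (div_nonneg ht.1 hhpos.le)
        rw [← le_div_iff₀ hhpos]
        exact h1
      have hk2 : t ≤ (k:ℝ)*h + h := by
        have h1 := Nat.lt_floor_add_one (t/h)
        rw [← hkdef] at h1
        have h2 : t < ((k:ℝ)+1) * h := by
          rw [← div_lt_iff₀ hhpos]
          exact h1
        have h3 : ((k:ℝ)+1) * h = (k:ℝ)*h + h := by ring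
        linarith [h2, h3]
      have hkm : k ≤ m := by
        rw [hkdef, hmdef]
        refine le_trans (Nat.floor_le_floor ?_) (Nat.floor_le_ceil _)
        gcongr
        exact ht.2
      have hkh1 : (k:ℝ) * h ≤ 1 := le_trans hk0 ht.2
      have hpk : p k = γ ((k:ℝ)*h) := by
        rw [hpdef]
        simp only [min_eq_left hkh1]
      have hdγp : dist (γ t) (p k) ≤ ε := by
        rw [hpk]
        have h5 := (hγ t ht ((k:ℝ)*h) ⟨by positivity, hkh1⟩).2
        have h6 : |t - (k:ℝ)*h| ≤ h := by rw [abs_le]; constructor <;> linarith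
        have h7 : |t - (k:ℝ)*h| ^ α ≤ h ^ α := Real.rpow_le_rpow (abs_nonneg _) h6 hα.le
        calc dist (γ t) (γ ((k:ℝ)*h)) ≤ Cγ * |t - (k:ℝ)*h| ^ α := h5
          _ ≤ Cγ * h ^ α := mul_le_mul_of_nonneg_left h7 hCpos.le
          _ = ε := hCγh
      have hxp : dist x (p k) ≤ r + ε :=
        le_trans (dist_triangle x (γ t) (p k)) (by linarith)
      have hkBM : k * B ≤ M := le_trans (Nat.mul_le_mul_right B hkm)
        (Nat.mul_le_mul_right B (Nat.le_succ m))
      by_cases hclose : dist x (p k) ≤ r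
      · show infDist x Γ ≤ r
        have hpkΓ : p k ∈ Γ := by
          rw [← hqp k]
          exact hFmem (k*B) hkBM
        exact le_trans (infDist_le_dist_of_mem hpkΓ) hclose
      · push_neg at hclose
        haveI : Nonempty (Fin n) := ⟨⟨0, hn⟩⟩
        obtain ⟨i, -, hi⟩ := Finset.exists_max_image Finset.univ
          (fun j => (x j - p k j) ^ 2) Finset.univ_nonempty
        have hmax : dist x (p k) ^ 2 ≤ n * (x i - p k i) ^ 2 := by
          rw [euclid_dist_sq]
          calc ∑ j, (x j - p k j) ^ 2 ≤ ∑ _j : Fin n, (x i - p k i) ^2 :=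
              Finset.sum_le_sum (fun j _ => hi j (Finset.mem_univ j))
            _ = n * (x i - p k i) ^ 2 := by
              rw [Finset.sum_const, Finset.card_univ, Fintype.card_fin, nsmul_eq_mul]
        have hci : dist x (p k) ≤ σ * |x i - p k i| := by
          have h1 : (σ * |x i - p k i|)^2 = n * (x i - p k i) ^2 := by
            rw [mul_pow, hσsq, sq_abs]
          have h2 : dist x (p k)^2 ≤ (σ * |x i - p k i|)^2 := by rw [h1]; exact hmax
          have h3 : (0:ℝ) ≤ σ * |x i - p k i| := mul_nonneg (by positivity) (abs_nonneg _)
          calc dist x (p k) = Real.sqrt (dist x (p k)^2) := (Real.sqrt_sq dist_nonneg).symm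
            _ ≤ Real.sqrt ((σ*|x i - p k i|)^2) := Real.sqrt_le_sqrt h2
            _ = σ*|x i - p k i| := Real.sqrt_sq h3
        set s : ℝ := if 0 ≤ x i - p k i then L else -L with hsdef
        have hkBM1 : k * B + (4 * i.val + 1) ≤ M := by
          have h1 : k * B ≤ m * B := Nat.mul_le_mul_right B hkm
          have h2 : M = m * B + B := by rw [hMdef]; ring
          have h3 := i.isLt
          omega
        have hkBM3 : k * B + (4 * i.val + 3) ≤ M := by
          have h1 : k * B ≤ m * B := Nat.mul_le_mul_right B hkm
          have h2 : M = m * B + B := by rw [hMdef]; ring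
          have h3 := i.isLt
          omega
        have hvmem : p k + s • e i ∈ Γ := by
          rw [hsdef]
          split_ifs
          · rw [← hqplus k i]
            exact hFmem _ hkBM1
          · have hsub : p k + (-L) • e i = p k - L • e i := by
              rw [neg_smul, ← sub_eq_add_neg]
            rw [hsub, ← hqminus k i]
            exact hFmem _ hkBM3
        have hsc : s * (x i - p k i) = L * |x i - p k i| := by
          rw [hsdef]
          split_ifs with hs0
          · rw [abs_of_nonneg hs0]
          · rw [abs_of_neg (lt_of_not_ge hs0)]
            ring
        have hss : s^2 = L^2 := by rw [hsdef]; split_ifs <;> ring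
        have hdv : dist x (p k + s • e i) ^ 2
            = dist x (p k)^2 - 2 * (L * |x i - p k i|) + L^2 := by
          simp only [hedef]
          rw [quad_vertex x (p k) s i]
          have h1 : 2 * s * (x i - p k i) = 2 * (L * |x i - p k i|) := by
            rw [mul_assoc, hsc]
          rw [h1, hss]
        have hL2 : L^2 = 4 * n * ε^2 := by
          have h1 : L^2 = 4*(σ^2)*ε^2 := by rw [hLdef]; ring
          rw [h1, hσsq]
        have hLci : 4 * ε * dist x (p k) ≤ 2 * (L * |x i - p k i|) := by
          rw [hLdef]
          have h1 := mul_le_mul_of_nonneg_left hci (by positivity : (0:ℝ) ≤ 4*ε)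
          calc 4 * ε * dist x (p k) ≤ 4*ε*(σ*|x i - p k i|) := h1
            _ = 2 * (2*σ*ε*|x i - p k i|) := by ring
        have hrε : r = 5*((n:ℝ)+1)*ε := by
          rw [hεdef, mul_comm (5*((n:ℝ)+1)) (r / (5*((n:ℝ)+1))),
            div_mul_cancel₀ r (by positivity : (5*((n:ℝ)+1)) ≠ 0)]
        have hq1 : 0 ≤ (dist x (p k) - r) * (r + ε - dist x (p k)) :=
          mul_nonneg (by linarith [hclose]) (by linarith [hxp])
        have hnε : (0:ℝ) ≤ (n:ℝ) * ε := mul_nonneg (by linarith [hn1]) hεpos.le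
        have h2r3 : (0:ℝ) ≤ 2*r - 3*ε := by linarith [hrε, hnε, hεpos]
        have hq2 : 0 ≤ (2*r - 3*ε) * (r + ε - dist x (p k)) :=
          mul_nonneg h2r3 (by linarith [hxp])
        have hq3 : 2*r*ε = 10*((n:ℝ)+1)*ε^2 := by rw [hrε]; ring
        have hnε2 : (0:ℝ) ≤ (n:ℝ) * ε^2 := mul_nonneg (by linarith [hn1]) (sq_nonneg ε)
        have hfin : dist x (p k + s • e i)^2 ≤ r^2 := by
          rw [hdv]
          nlinarith only [hq1, hq2, hL2, hLci, hq3, hnε2, sq_nonneg ε]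
        have hdvr : dist x (p k + s • e i) ≤ r := by
          have h1 : dist x (p k + s • e i) = Real.sqrt (dist x (p k + s • e i)^2) :=
            (Real.sqrt_sq dist_nonneg).symm
          rw [h1]
          calc Real.sqrt (dist x (p k + s • e i)^2) ≤ Real.sqrt (r^2) :=
              Real.sqrt_le_sqrt hfin
            _ = r := Real.sqrt_sq hr.le
        exact le_trans (infDist_le_dist_of_mem hvmem) hdvr
    -- assemble
    have hmdp : MDP (nbhd (γ '' Set.Icc 0 1) r) r ≤ μH[1] Γ := by
      refine iInf_le_of_le Γ ?_
      refine iInf_le_of_le hrect ?_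
      exact iInf_le_of_le hcover (le_refl _)
    refine le_trans hmdp (le_trans hsum1 (ENNReal.ofReal_le_ofReal ?_))
    have hM : (M:ℝ) = ((m:ℝ)+1) * (4*(n:ℝ)+1) := by
      rw [hMdef, hBdef]
      push_cast
      ring
    have hm3 : (m:ℝ) + 1 ≤ 3 / h := by
      have h1 : (m:ℝ) < 1/h + 1 := Nat.ceil_lt_add_one (by positivity)
      have h2 : 1 ≤ 1/h := by rw [le_div_iff₀ hhpos]; linarith [hh1]
      have h3 : 3/h = 3*(1/h) := by ring
      rw [h3]
      linarith
    have h2Lε : 2*L + ε = (4*σ+1)*ε := by rw [hLdef]; ring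
    have hrh : r / h = A ^ α⁻¹ * r ^ ((α-1)/α) := by
      have h1 : h * A ^ α⁻¹ = r ^ α⁻¹ := by
        rw [hhdef, ← Real.mul_rpow hrA.le hApos.le]
        congr 1
        field_simp
      have h2 : r ^ α⁻¹ * r ^ ((α-1)/α) = r := by
        rw [← Real.rpow_add hr, show α⁻¹ + (α-1)/α = 1 by field_simp; ring, Real.rpow_one]
      rw [eq_comm, eq_div_iff hhpos.ne']
      calc A ^ α⁻¹ * r ^ ((α-1)/α) * h = (h * A ^ α⁻¹) * r ^ ((α-1)/α) := by ring
        _ = r ^ α⁻¹ * r ^ ((α-1)/α) := by rw [h1]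
        _ = r := h2
    have hεr : ε ≤ r := by
      rw [hεdef, div_le_iff₀ (by positivity)]
      nlinarith
    calc (M:ℝ) * (2*L+ε) = ((m:ℝ)+1) * ((4*(n:ℝ)+1) * ((4*σ+1)*ε)) := by
          rw [hM, h2Lε]; ring
      _ ≤ (3/h) * ((4*(n:ℝ)+1) * ((4*σ+1)*ε)) := by
          apply mul_le_mul_of_nonneg_right hm3 (by positivity)
      _ ≤ (3/h) * ((4*(n:ℝ)+1) * ((4*σ+1)*r)) := by
          apply mul_le_mul_of_nonneg_left ?_ (by positivity)
          apply mul_le_mul_of_nonneg_left ?_ (by positivity)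
          apply mul_le_mul_of_nonneg_left hεr (by positivity)
      _ = 3 * (4*(n:ℝ)+1) * (4*σ+1) * (r / h) := by ring
      _ = Cup * r ^ ((α-1)/α) := by rw [hrh, hCupdef]; ring
      _ ≤ (Clow + Cup) * r ^ ((α-1)/α) := by
          apply mul_le_mul_of_nonneg_right (by linarith) (Real.rpow_pos_of_pos hr _).le

end Main
end

section
/- Let 0 < α ≤ β and let γ : [0,1] → ℝⁿ be an (α, β)-bi-Hölder curve with constant C_γ ≥ 1. Define Λ̂(E, r) := inf{ℓ(φ) : φ : [0,1] → ℝⁿ Lipschitz with E ⊆ B(φ([0,1]), r)}, where ℓ denotes the length of the parameterization. Then there exists C = C(α, β, C_γ, n) such that (1/C) r^((β−1)/β) ≤ Λ̂(B(γ([0,1]), r), r) ≤ C r^((α−1)/α) for all sufficiently small r > 0. -/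
open MeasureTheory Metric Set ENNReal

section aux

variable {X : Type*} [NormedAddCommGroup X] [NormedSpace ℝ X]

lemma evar_le_lip {Y : Type*} [PseudoMetricSpace Y] {f : ℝ → Y} {K : NNReal}
    (h : LipschitzOnWith K f (Set.Icc 0 1)) :
    eVariationOn f (Set.Icc 0 1) ≤ (K : ℝ≥0∞) := by
  apply iSup_le
  rintro ⟨m, u, hu, us⟩
  have key : ∀ i, edist (f (u (i + 1))) (f (u i)) ≤ (K : ℝ≥0∞) * edist (u (i+1)) (u i) :=
    fun i => h (us (i+1)) (us i)
  calc ∑ i ∈ Finset.range m, edist (f (u (i + 1))) (f (u i))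
      ≤ ∑ i ∈ Finset.range m, (K : ℝ≥0∞) * edist (u (i+1)) (u i) :=
        Finset.sum_le_sum fun i _ => key i
    _ = (K : ℝ≥0∞) * ∑ i ∈ Finset.range m, edist (u (i+1)) (u i) := by
        rw [Finset.mul_sum]
    _ ≤ (K : ℝ≥0∞) * 1 := by
        gcongr
        have : ∀ i ∈ Finset.range m, edist (u (i+1)) (u i)
            = ENNReal.ofReal (u (i+1) - u i) := by
          intro i _
          rw [edist_dist, Real.dist_eq, abs_of_nonneg (by linarith [hu (Nat.le_succ i)])]
        rw [Finset.sum_congr rfl this, ← ENNReal.ofReal_sum_of_nonneg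
          (fun i _ => by linarith [hu (Nat.le_succ i)]), Finset.sum_range_sub u]
        rw [← ENNReal.ofReal_one]
        exact ENNReal.ofReal_le_ofReal (by linarith [(us m).1, (us m).2, (us 0).1, (us 0).2])
    _ = (K : ℝ≥0∞) := mul_one _

noncomputable def polyPath (q : ℕ → X) (t : ℝ) : X :=
  AffineMap.lineMap (q ⌊t⌋₊) (q (⌊t⌋₊ + 1)) (t - (⌊t⌋₊ : ℝ))

lemma polyPath_eq (q : ℕ → X) (j : ℕ) {u : ℝ} (h1 : (j:ℝ) ≤ u) (h2 : u ≤ (j:ℝ) + 1) :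
    polyPath q u = AffineMap.lineMap (q j) (q (j+1)) (u - (j:ℝ)) := by
  rcases lt_or_eq_of_le h2 with h2' | h2'
  · have hj : ⌊u⌋₊ = j := by
      rw [Nat.floor_eq_iff (le_trans (Nat.cast_nonneg j) h1)]
      exact ⟨h1, by exact_mod_cast h2'⟩
    rw [polyPath, hj]
  · have hj : ⌊u⌋₊ = j + 1 := by
      rw [h2']
      rw [show (j:ℝ) + 1 = ((j+1 : ℕ) : ℝ) by push_cast; ring, Nat.floor_natCast]
    rw [polyPath, hj, h2']
    push_cast
    rw [show (j:ℝ) + 1 - ((j:ℝ) + 1) = 0 by ring, show (j:ℝ) + 1 - (j:ℝ) = 1 by ring]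
    simp [AffineMap.lineMap_apply_zero, AffineMap.lineMap_apply_one]

lemma polyPath_nat (q : ℕ → X) (j : ℕ) : polyPath q (j:ℝ) = q j := by
  rw [polyPath_eq q j le_rfl (by linarith), sub_self]
  simp [AffineMap.lineMap_apply_zero]

lemma polyPath_dist_same (q : ℕ → X) {d : ℝ} (hq : ∀ j, dist (q (j+1)) (q j) ≤ d)
    (j : ℕ) {s t : ℝ} (hs : (j:ℝ) ≤ s) (hst : s ≤ t) (ht : t ≤ (j:ℝ) + 1) :
    dist (polyPath q t) (polyPath q s) ≤ d * (t - s) := by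
  rw [polyPath_eq q j (le_trans hs hst) ht, polyPath_eq q j hs (le_trans hst ht),
    dist_lineMap_lineMap]
  have : |t - (j:ℝ) - (s - (j:ℝ))| = t - s := by
    rw [abs_of_nonneg (by linarith)]; ring
  rw [Real.dist_eq, this, dist_comm]
  have hd0 : 0 ≤ d := le_trans dist_nonneg (hq j)
  calc (t - s) * dist (q (j+1)) (q j) ≤ (t - s) * d := by
        apply mul_le_mul_of_nonneg_left (hq j) (by linarith)
    _ = d * (t - s) := by ring

lemma polyPath_dist (q : ℕ → X) {d : ℝ} (hq : ∀ j, dist (q (j+1)) (q j) ≤ d)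
    {s t : ℝ} (hs : 0 ≤ s) (hst : s ≤ t) :
    dist (polyPath q t) (polyPath q s) ≤ d * (t - s) := by
  have key : ∀ k : ℕ, ∀ s t : ℝ, 0 ≤ s → s ≤ t → t ≤ (k:ℝ) →
      dist (polyPath q t) (polyPath q s) ≤ d * (t - s) := by
    intro k
    induction k with
    | zero =>
      intro s t hs hst ht
      have hts : s = t := le_antisymm hst (le_trans (by exact_mod_cast ht) hs)
      rw [hts]
      simp
    | succ k ih =>
      intro s t hs hst ht
      rcases le_or_gt t (k:ℝ) with h | h
      · exact ih s t hs hst h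
      rcases le_or_gt (k:ℝ) s with h' | h'
      · exact polyPath_dist_same q hq k h' hst (by push_cast at ht ⊢; linarith)
      · calc dist (polyPath q t) (polyPath q s)
            ≤ dist (polyPath q t) (polyPath q (k:ℝ))
              + dist (polyPath q (k:ℝ)) (polyPath q s) := dist_triangle _ _ _
          _ ≤ d * (t - (k:ℝ)) + d * ((k:ℝ) - s) := by
              gcongr
              · exact polyPath_dist_same q hq k le_rfl (le_of_lt h)
                  (by push_cast at ht ⊢; linarith)
              · exact ih s (k:ℝ) hs (le_of_lt h') le_rfl
          _ = d * (t - s) := by ring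
  exact key ⌈t⌉₊ s t hs hst (Nat.le_ceil t)

lemma exists_poly (q : ℕ → X) (M : ℕ) (hM : 0 < M) {d : ℝ} (hd : 0 ≤ d)
    (hq : ∀ j, dist (q (j+1)) (q j) ≤ d) :
    ∃ φ : ℝ → X, (∃ K : NNReal, LipschitzOnWith K φ (Set.Icc 0 1)) ∧
      (∀ j ≤ M, q j ∈ φ '' Set.Icc 0 1) ∧
      eVariationOn φ (Set.Icc 0 1) ≤ ENNReal.ofReal ((M:ℝ) * d) := by
  set φ : ℝ → X := fun t => polyPath q ((M:ℝ) * t) with hφ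
  have hMpos : (0:ℝ) < (M:ℝ) := by exact_mod_cast hM
  have key : ∀ x ∈ Set.Icc (0:ℝ) 1, ∀ y ∈ Set.Icc (0:ℝ) 1, x ≤ y →
      dist (φ y) (φ x) ≤ ((M:ℝ) * d) * (y - x) := by
    intro x hx y hy hxy
    calc dist (φ y) (φ x) ≤ d * ((M:ℝ) * y - (M:ℝ) * x) := by
          apply polyPath_dist q hq (by nlinarith [hx.1]) (by nlinarith)
      _ = (M:ℝ) * d * (y - x) := by ring
  have hlip : LipschitzOnWith (Real.toNNReal ((M:ℝ) * d)) φ (Set.Icc 0 1) := by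
    apply LipschitzOnWith.of_dist_le_mul
    intro x hx y hy
    rw [Real.coe_toNNReal _ (by positivity)]
    rcases le_total x y with hxy | hxy
    · rw [dist_comm, Real.dist_eq, abs_of_nonpos (by linarith)]
      calc dist (φ y) (φ x) ≤ ((M:ℝ) * d) * (y - x) := key x hx y hy hxy
        _ = (M:ℝ) * d * -(x - y) := by ring
    · rw [Real.dist_eq, abs_of_nonneg (by linarith)]
      exact key y hy x hx hxy
  refine ⟨φ, ⟨_, hlip⟩, ?_, ?_⟩
  · intro j hj
    refine ⟨(j:ℝ) / (M:ℝ), ⟨by positivity, by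
      rw [div_le_one hMpos]; exact_mod_cast hj⟩, ?_⟩
    show polyPath q ((M:ℝ) * ((j:ℝ)/(M:ℝ))) = q j
    rw [mul_div_cancel₀ _ (ne_of_gt hMpos), polyPath_nat]
  · calc eVariationOn φ (Set.Icc 0 1) ≤ (Real.toNNReal ((M:ℝ) * d) : ℝ≥0∞) :=
        evar_le_lip hlip
      _ = ENNReal.ofReal ((M:ℝ) * d) := rfl

end aux

/-- The parameterized MDP value: infimal length (total variation on `[0,1]`)
of Lipschitz parameterizations whose image's `r`-neighborhood covers `E`. -/
noncomputable def MDPlen {n : ℕ} (E : Set (EuclideanSpace ℝ (Fin n))) (r : ℝ) : ℝ≥0∞ :=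
  ⨅ (φ : ℝ → EuclideanSpace ℝ (Fin n))
    (_ : ∃ K : NNReal, LipschitzOnWith K φ (Set.Icc 0 1))
    (_ : E ⊆ nbhd (φ '' Set.Icc 0 1) r), eVariationOn φ (Set.Icc 0 1)

set_option maxHeartbeats 1000000 in
/-- Two-sided bounds for the parameterized MDP value of neighborhoods of an
(α,β)-bi-Hölder curve. -/
theorem biHolder_bounds_param {n : ℕ} (α β : ℝ) (hα : 0 < α) (hαβ : α ≤ β)
    (Cγ : ℝ) (hC : 1 ≤ Cγ) (γ : ℝ → EuclideanSpace ℝ (Fin n))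
    (hγ : ∀ x ∈ Set.Icc (0:ℝ) 1, ∀ y ∈ Set.Icc (0:ℝ) 1,
      (1 / Cγ) * |x - y| ^ β ≤ dist (γ x) (γ y) ∧ dist (γ x) (γ y) ≤ Cγ * |x - y| ^ α) :
    ∃ C : ℝ, 0 < C ∧ ∃ r₀ : ℝ, 0 < r₀ ∧ ∀ r : ℝ, 0 < r → r < r₀ →
      ENNReal.ofReal (C⁻¹ * r ^ ((β - 1) / β)) ≤ MDPlen (nbhd (γ '' Set.Icc 0 1) r) r ∧
      MDPlen (nbhd (γ '' Set.Icc 0 1) r) r ≤ ENNReal.ofReal (C * r ^ ((α - 1) / α)) := by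
  have hβ : 0 < β := lt_of_lt_of_le hα hαβ
  have hCpos : 0 < Cγ := lt_of_lt_of_le one_pos hC
  -- the finite 1-net of the closed ball of radius 3
  obtain ⟨D, hDsub, hDfin, hDcov⟩ :=
    (isCompact_closedBall (0 : EuclideanSpace ℝ (Fin n)) 3).finite_cover_balls one_pos
  set l : List (EuclideanSpace ℝ (Fin n)) := hDfin.toFinset.toList with hl
  set m : ℕ := l.length with hm
  have hmem_l : ∀ x, x ∈ l ↔ x ∈ D := by
    intro x; rw [hl, Finset.mem_toList, Set.Finite.mem_toFinset]
  have hmpos : 0 < m := by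
    have h0 : (0 : EuclideanSpace ℝ (Fin n)) ∈ ⋃ x ∈ D, ball x 1 :=
      hDcov (mem_closedBall_self (by norm_num))
    rw [Set.mem_iUnion₂] at h0
    obtain ⟨d, hd, -⟩ := h0
    rw [hm]
    exact List.length_pos_iff.mpr (fun h => by rw [h] at hmem_l; simpa using (hmem_l d).mpr hd)
  set C : ℝ := max (2 * (4*Cγ) ^ (β⁻¹)) (21 * (m:ℝ) * Cγ ^ (α⁻¹)) with hCdef
  have hC1 : 2 * (4*Cγ) ^ (β⁻¹) ≤ C := le_max_left _ _
  have hC2 : 21 * (m:ℝ) * Cγ ^ (α⁻¹) ≤ C := le_max_right _ _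
  have hCpos' : 0 < C := lt_of_lt_of_le (by positivity) hC1
  refine ⟨C, hCpos', min 1 ((2:ℝ) ^ (-β) / (4*Cγ)), by positivity, fun r hr hrr₀ => ?_⟩
  have hr1 : r < 1 := lt_of_lt_of_le hrr₀ (min_le_left _ _)
  have hr2 : r < (2:ℝ) ^ (-β) / (4*Cγ) := lt_of_lt_of_le hrr₀ (min_le_right _ _)
  constructor
  · -- LOWER BOUND
    set Δ : ℝ := (4*Cγ*r) ^ (β⁻¹) with hΔdef
    have hΔpos : 0 < Δ := Real.rpow_pos_of_pos (by positivity) _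
    have hΔβ : Δ ^ β = 4*Cγ*r := Real.rpow_inv_rpow (by positivity) (ne_of_gt hβ)
    have hΔhalf : Δ ≤ 1/2 := by
      have h1 : 4*Cγ*r ≤ (2:ℝ) ^ (-β) := by
        have h := (lt_div_iff₀ (show (0:ℝ) < 4*Cγ by positivity)).mp hr2
        nlinarith
      calc Δ ≤ ((2:ℝ) ^ (-β)) ^ (β⁻¹) :=
            Real.rpow_le_rpow (by positivity) h1 (by positivity)
        _ = (2:ℝ) ^ ((-β) * β⁻¹) := (Real.rpow_mul (by norm_num) _ _).symm
        _ = 1/2 := by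
            rw [neg_mul, mul_inv_cancel₀ (ne_of_gt hβ), Real.rpow_neg (by norm_num),
              Real.rpow_one]
            norm_num
    set M : ℕ := ⌊Δ⁻¹⌋₊ with hMdef
    have hΔinv2 : (2:ℝ) ≤ Δ⁻¹ := by
      rw [le_inv_comm₀ (by norm_num) hΔpos]; linarith
    have hM2 : 2 ≤ M := Nat.le_floor (by exact_mod_cast hΔinv2)
    have hMΔ : (M:ℝ) * Δ ≤ 1 := by
      have := Nat.floor_le (le_of_lt (inv_pos.mpr hΔpos))
      calc (M:ℝ) * Δ ≤ Δ⁻¹ * Δ := mul_le_mul_of_nonneg_right this hΔpos.le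
        _ = 1 := inv_mul_cancel₀ (ne_of_gt hΔpos)
    have hMge : Δ⁻¹ / 2 ≤ (M:ℝ) := by
      have h1 : Δ⁻¹ - 1 < (M:ℝ) := Nat.sub_one_lt_floor _
      linarith
    refine le_iInf fun φ => le_iInf fun hK => le_iInf fun hcov => ?_
    have himg_ne : (φ '' Set.Icc 0 1).Nonempty :=
      ⟨φ 0, Set.mem_image_of_mem _ (by norm_num : (0:ℝ) ∈ Set.Icc (0:ℝ) 1)⟩
    have htmem : ∀ k : ℕ, ((min k M : ℕ) : ℝ) * Δ ∈ Set.Icc (0:ℝ) 1 := by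
      intro k
      constructor
      · positivity
      · calc ((min k M : ℕ) : ℝ) * Δ ≤ (M:ℝ) * Δ :=
            mul_le_mul_of_nonneg_right (by exact_mod_cast min_le_right k M) hΔpos.le
          _ ≤ 1 := hMΔ
    have hsel : ∀ k : ℕ, ∃ s, s ∈ Set.Icc (0:ℝ) 1 ∧
        dist (γ (((min k M : ℕ) : ℝ) * Δ)) (φ s) < 5/4 * r := by
      intro k
      have hin : γ (((min k M : ℕ) : ℝ) * Δ) ∈ nbhd (γ '' Set.Icc 0 1) r :=
        le_trans (infDist_le_dist_of_mem (Set.mem_image_of_mem _ (htmem k)))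
          (by simp [hr.le])
      have hlt : infDist (γ (((min k M : ℕ) : ℝ) * Δ)) (φ '' Set.Icc 0 1) < 5/4 * r :=
        lt_of_le_of_lt (hcov hin) (by linarith)
      rw [infDist_lt_iff himg_ne] at hlt
      obtain ⟨y, ⟨s, hs, rfl⟩, hy⟩ := hlt
      exact ⟨s, hs, hy⟩
    choose S hS1 hS2 using hsel
    have hsep : ∀ j k : ℕ, j ≤ M → k ≤ M → j ≠ k →
        3/2 * r ≤ dist (φ (S j)) (φ (S k)) := by
      intro j k hj hk hjk
      have hmj : min j M = j := min_eq_left hj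
      have hmk : min k M = k := min_eq_left hk
      have habs : (1:ℝ) ≤ |(j:ℝ) - (k:ℝ)| := by
        have h1 : ((j:ℤ) - (k:ℤ)) ≠ 0 := sub_ne_zero.mpr (by exact_mod_cast hjk)
        have h2 := Int.one_le_abs h1
        have : ((1:ℤ):ℝ) ≤ ((|(j:ℤ) - (k:ℤ)|:ℤ):ℝ) := by exact_mod_cast h2
        rw [Int.cast_abs] at this
        push_cast at this ⊢
        exact this
      have hΔle : Δ ≤ |(j:ℝ)*Δ - (k:ℝ)*Δ| := by
        have : |(j:ℝ)*Δ - (k:ℝ)*Δ| = |(j:ℝ) - (k:ℝ)| * Δ := by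
          rw [← sub_mul, abs_mul, abs_of_nonneg hΔpos.le]
        rw [this]; nlinarith
      have hlow := (hγ ((j:ℝ)*Δ) (by have := htmem j; rwa [hmj] at this)
        ((k:ℝ)*Δ) (by have := htmem k; rwa [hmk] at this)).1
      have h4r : 4*r ≤ dist (γ ((j:ℝ)*Δ)) (γ ((k:ℝ)*Δ)) := by
        have h1 : Δ ^ β ≤ |(j:ℝ)*Δ - (k:ℝ)*Δ| ^ β :=
          Real.rpow_le_rpow hΔpos.le hΔle hβ.le
        have h2 : (1/Cγ) * Δ ^ β ≤ (1/Cγ) * |(j:ℝ)*Δ - (k:ℝ)*Δ| ^ β :=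
          mul_le_mul_of_nonneg_left h1 (by positivity)
        rw [hΔβ] at h2
        have h3 : (1/Cγ) * (4*Cγ*r) = 4*r := by field_simp
        linarith [h2.trans hlow]
      have hj2 := hS2 j; rw [hmj] at hj2
      have hk2 := hS2 k; rw [hmk] at hk2
      have htri := dist_triangle4 (γ ((j:ℝ)*Δ)) (φ (S j)) (φ (S k)) (γ ((k:ℝ)*Δ))
      rw [dist_comm (φ (S k)) (γ ((k:ℝ)*Δ))] at htri
      linarith
    have hSinj : Set.InjOn S (Finset.range (M+1) : Set ℕ) := by
      intro j hj k hk hjk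
      by_contra hne
      have := hsep j k (by simpa using Nat.lt_succ_iff.mp (by simpa using hj))
        (by simpa using Nat.lt_succ_iff.mp (by simpa using hk)) hne
      rw [hjk, dist_self] at this
      linarith
    set T : Finset ℝ := (Finset.range (M+1)).image S with hT
    have hcard : T.card = M + 1 := by
      rw [hT, Finset.card_image_of_injOn (by exact_mod_cast hSinj), Finset.card_range]
    set e := T.orderIsoOfFin hcard with he
    set u : ℕ → ℝ := fun i => (e ⟨min i M, Nat.lt_succ_of_le (min_le_right i M)⟩ : ℝ)
      with hu_def
    have hu : Monotone u := by
      intro i j hij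
      have : (⟨min i M, Nat.lt_succ_of_le (min_le_right i M)⟩ : Fin (M+1))
          ≤ ⟨min j M, Nat.lt_succ_of_le (min_le_right j M)⟩ := by
        simp only [Fin.mk_le_mk]
        exact min_le_min hij le_rfl
      exact Subtype.coe_le_coe.mpr (e.monotone this)
    have humem : ∀ i, u i ∈ T := fun i => (e _).2
    have hTmem : ∀ x ∈ T, ∃ k ≤ M, x = S k := by
      intro x hx
      rw [hT, Finset.mem_image] at hx
      obtain ⟨k, hk, rfl⟩ := hx
      exact ⟨k, Nat.lt_succ_iff.mp (Finset.mem_range.mp hk), rfl⟩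
    have us : ∀ i, u i ∈ Set.Icc (0:ℝ) 1 := by
      intro i
      obtain ⟨k, -, hkx⟩ := hTmem _ (humem i)
      rw [hkx]; exact hS1 k
    have hterm : ∀ i < M, ENNReal.ofReal r ≤ edist (φ (u (i+1))) (φ (u i)) := by
      intro i hi
      have hne : u i ≠ u (i+1) := by
        rw [hu_def]
        intro hcon
        have h1 : (⟨min i M, Nat.lt_succ_of_le (min_le_right i M)⟩ : Fin (M+1))
            = ⟨min (i+1) M, Nat.lt_succ_of_le (min_le_right (i+1) M)⟩ :=
          e.injective (Subtype.coe_injective hcon)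
        have h2 : min i M = min (i+1) M := by simpa [Fin.mk.injEq] using h1
        rw [min_eq_left hi.le, min_eq_left hi] at h2
        omega
      obtain ⟨j, hj, hjx⟩ := hTmem _ (humem i)
      obtain ⟨k, hk, hkx⟩ := hTmem _ (humem (i+1))
      have hjk : j ≠ k := by
        intro hcon; rw [hcon, ← hkx] at hjx; exact hne hjx
      have := hsep k j hk hj (Ne.symm hjk)
      rw [edist_dist, hjx, hkx]
      apply ENNReal.ofReal_le_ofReal
      linarith
    have hsum : ENNReal.ofReal ((M:ℝ) * r) ≤ eVariationOn φ (Set.Icc 0 1) := by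
      calc ENNReal.ofReal ((M:ℝ) * r)
          = ∑ _i ∈ Finset.range M, ENNReal.ofReal r := by
            rw [Finset.sum_const, Finset.card_range, nsmul_eq_mul,
              ← ENNReal.ofReal_natCast M, ← ENNReal.ofReal_mul (by positivity)]
        _ ≤ ∑ i ∈ Finset.range M, edist (φ (u (i+1))) (φ (u i)) :=
            Finset.sum_le_sum fun i hi => hterm i (Finset.mem_range.mp hi)
        _ ≤ eVariationOn φ (Set.Icc 0 1) := eVariationOn.sum_le (f := φ) (n := M) hu us
    refine le_trans (ENNReal.ofReal_le_ofReal ?_) hsum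
    -- real arithmetic: C⁻¹ * r ^ ((β-1)/β) ≤ M * r
    have hrpow : r ^ ((β-1)/β) = r * (r ^ (β⁻¹))⁻¹ := by
      rw [show (β-1)/β = 1 + (-β⁻¹) by field_simp; ring, Real.rpow_add hr,
        Real.rpow_one, Real.rpow_neg hr.le]
    have hΔinv : Δ⁻¹ = ((4*Cγ) ^ (β⁻¹))⁻¹ * (r ^ (β⁻¹))⁻¹ := by
      rw [hΔdef, show 4*Cγ*r = (4*Cγ)*r by ring,
        Real.mul_rpow (by positivity) hr.le, mul_inv]
    have hCinv : C⁻¹ ≤ (2 * (4*Cγ) ^ (β⁻¹))⁻¹ := by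
      apply inv_anti₀ (by positivity) hC1
    have hrpow_pos : 0 < (r ^ (β⁻¹))⁻¹ := by positivity
    calc C⁻¹ * r ^ ((β-1)/β) ≤ (2 * (4*Cγ) ^ (β⁻¹))⁻¹ * r ^ ((β-1)/β) :=
          mul_le_mul_of_nonneg_right hCinv (by positivity)
      _ = (Δ⁻¹ / 2) * r := by
          rw [hrpow, hΔinv, mul_inv]; ring
      _ ≤ (M:ℝ) * r := by gcongr
  · -- UPPER BOUND
    set N : ℕ := ⌈(Cγ/r) ^ (α⁻¹)⌉₊ with hNdef
    have hCr1 : 1 ≤ Cγ / r := (one_le_div hr).mpr (by linarith)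
    have ha1 : 1 ≤ (Cγ/r) ^ (α⁻¹) := Real.one_le_rpow hCr1 (by positivity)
    have hNpos : 0 < N := Nat.ceil_pos.mpr (by linarith)
    have hNR : (0:ℝ) < (N:ℝ) := by exact_mod_cast hNpos
    have hNge : (Cγ/r) ^ (α⁻¹) ≤ (N:ℝ) := Nat.le_ceil _
    have hNα : Cγ * ((N:ℝ)⁻¹) ^ α ≤ r := by
      have h1 : Cγ / r ≤ (N:ℝ) ^ α := by
        calc Cγ / r = ((Cγ/r) ^ (α⁻¹)) ^ α :=
              (Real.rpow_inv_rpow (by positivity) (ne_of_gt hα)).symm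
          _ ≤ (N:ℝ) ^ α := Real.rpow_le_rpow (by positivity) hNge hα.le
      rw [Real.inv_rpow hNR.le]
      have h3 : ((N:ℝ)^α)⁻¹ ≤ (Cγ/r)⁻¹ := inv_anti₀ (by positivity) h1
      have h4 : Cγ * (Cγ/r)⁻¹ = r := by field_simp
      calc Cγ * ((N:ℝ)^α)⁻¹ ≤ Cγ * (Cγ/r)⁻¹ :=
            mul_le_mul_of_nonneg_left h3 (by positivity)
        _ = r := h4
    have hgrid : ∀ a ∈ Set.Icc (0:ℝ) 1, ∀ b ∈ Set.Icc (0:ℝ) 1, |a - b| ≤ (N:ℝ)⁻¹ →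
        dist (γ a) (γ b) ≤ r := by
      intro a ha b hb hab
      have h0 := (hγ a ha b hb).2
      have h1 : |a-b| ^ α ≤ ((N:ℝ)⁻¹) ^ α := Real.rpow_le_rpow (abs_nonneg _) hab hα.le
      calc dist (γ a) (γ b) ≤ Cγ * |a-b|^α := h0
        _ ≤ Cγ * ((N:ℝ)⁻¹)^α := mul_le_mul_of_nonneg_left h1 (by positivity)
        _ ≤ r := hNα
    have hget : ∀ i : ℕ, l.getD (i % m) 0 ∈ D := by
      intro i
      have hlt : i % m < l.length := Nat.mod_lt _ hmpos
      rw [List.getD_eq_getElem l 0 hlt]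
      exact (hmem_l _).mp (List.getElem_mem hlt)
    have hnorm3 : ∀ i : ℕ, ‖l.getD (i % m) 0‖ ≤ 3 := fun i => by
      have h := hDsub (hget i); rwa [mem_closedBall, dist_zero_right] at h
    set q : ℕ → EuclideanSpace ℝ (Fin n) :=
      fun j => γ (((min (j / m) N : ℕ) : ℝ) / (N:ℝ)) + r • l.getD (j % m) 0 with hq_def
    have hkIcc : ∀ k : ℕ, k ≤ N → ((k:ℕ):ℝ)/(N:ℝ) ∈ Set.Icc (0:ℝ) 1 := by
      intro k hk
      constructor
      · positivity
      · rw [div_le_one hNR]; exact_mod_cast hk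
    have hq7 : ∀ j, dist (q (j+1)) (q j) ≤ 7*r := by
      intro j
      set k1 := min ((j+1)/m) N with hk1
      set k2 := min (j/m) N with hk2
      have hk1N : k1 ≤ N := min_le_right _ _
      have hk2N : k2 ≤ N := min_le_right _ _
      have hk12 : k2 ≤ k1 ∧ k1 ≤ k2 + 1 := by
        constructor
        · exact min_le_min (Nat.div_le_div_right (Nat.le_succ j)) le_rfl
        · have h5 : (j+1)/m ≤ j/m + 1 := by
            calc (j+1)/m ≤ (j+m)/m := Nat.div_le_div_right (by omega)
              _ = j/m + 1 := Nat.add_div_right j hmpos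
          omega
      have e1 : (k2:ℝ) ≤ k1 := by exact_mod_cast hk12.1
      have e2 : (k1:ℝ) ≤ (k2:ℝ) + 1 := by exact_mod_cast hk12.2
      have hdiff : |((k1:ℕ):ℝ)/(N:ℝ) - ((k2:ℕ):ℝ)/(N:ℝ)| ≤ (N:ℝ)⁻¹ := by
        have heq : (k1:ℝ)/(N:ℝ) - (k2:ℝ)/N = ((k1:ℝ)-(k2:ℝ))/N := by ring
        rw [heq, abs_of_nonneg (div_nonneg (by linarith) hNR.le), ← one_div]
        gcongr
        linarith
      have hd1 : dist (γ (((k1:ℕ):ℝ)/(N:ℝ))) (γ (((k2:ℕ):ℝ)/(N:ℝ))) ≤ r :=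
        hgrid _ (hkIcc k1 hk1N) _ (hkIcc k2 hk2N) hdiff
      have hd2 : dist (r • l.getD ((j+1) % m) 0) (r • l.getD (j % m) 0) ≤ 6*r := by
        rw [dist_smul₀, Real.norm_eq_abs, abs_of_nonneg hr.le]
        have h6 : dist (l.getD ((j+1) % m) 0) (l.getD (j % m) 0) ≤ 6 := by
          calc dist (l.getD ((j+1) % m) 0) (l.getD (j % m) 0)
              ≤ ‖l.getD ((j+1) % m) 0‖ + ‖l.getD (j % m) 0‖ := by
                rw [dist_eq_norm]; exact norm_sub_le _ _
            _ ≤ 6 := by linarith [hnorm3 (j+1), hnorm3 j]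
        nlinarith
      have e3 : q (j+1) = γ (((k1:ℕ):ℝ)/(N:ℝ)) + r • l.getD ((j+1) % m) 0 := by
        rw [hq_def, hk1]
      have e4 : q j = γ (((k2:ℕ):ℝ)/(N:ℝ)) + r • l.getD (j % m) 0 := by
        rw [hq_def, hk2]
      rw [e3, e4]
      calc dist (γ (((k1:ℕ):ℝ)/(N:ℝ)) + r • l.getD ((j+1) % m) 0)
            (γ (((k2:ℕ):ℝ)/(N:ℝ)) + r • l.getD (j % m) 0)
          ≤ dist (γ (((k1:ℕ):ℝ)/(N:ℝ))) (γ (((k2:ℕ):ℝ)/(N:ℝ)))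
            + dist (r • l.getD ((j+1) % m) 0) (r • l.getD (j % m) 0) :=
            dist_add_add_le _ _ _ _
        _ ≤ r + 6*r := add_le_add hd1 hd2
        _ = 7*r := by ring
    obtain ⟨φ, hKex, himg, hvar⟩ := exists_poly q ((N+1)*m) (by positivity) (d := 7*r)
      (by positivity) hq7
    have hΓne : (γ '' Set.Icc 0 1).Nonempty :=
      ⟨γ 0, Set.mem_image_of_mem _ (by norm_num : (0:ℝ) ∈ Set.Icc (0:ℝ) 1)⟩
    have hcov : nbhd (γ '' Set.Icc 0 1) r ⊆ nbhd (φ '' Set.Icc 0 1) r := by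
      intro x hx
      have h2r : infDist x (γ '' Set.Icc 0 1) < 2*r := lt_of_le_of_lt hx (by linarith)
      rw [infDist_lt_iff hΓne] at h2r
      obtain ⟨y, ⟨t, ht, rfl⟩, hxy⟩ := h2r
      set k : ℕ := ⌊t * N⌋₊ with hkdef
      have hkN : k ≤ N := by
        have h1 : t * N ≤ (N:ℝ) := by nlinarith [ht.1, ht.2]
        calc k ≤ ⌊(N:ℝ)⌋₊ := Nat.floor_le_floor h1
          _ = N := Nat.floor_natCast N
      have h1 : (k:ℝ) ≤ t*N := Nat.floor_le (mul_nonneg ht.1 hNR.le)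
      have h2 : t*N < (k:ℝ) + 1 := Nat.lt_floor_add_one _
      have htk : |t - (k:ℝ)/N| ≤ (N:ℝ)⁻¹ := by
        have h3 : t ≤ ((k:ℝ)+1)/N := by rw [le_div_iff₀ hNR]; linarith
        have h4 : (k:ℝ)/N ≤ t := by rw [div_le_iff₀ hNR]; exact h1
        have h5 : ((k:ℝ)+1)/N - (k:ℝ)/N = (N:ℝ)⁻¹ := by field_simp; ring
        rw [abs_of_nonneg (by linarith)]
        linarith
      have hdist1 : dist (γ t) (γ ((k:ℝ)/N)) ≤ r := hgrid t ht _ (hkIcc k hkN) htk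
      have hdist2 : dist x (γ ((k:ℝ)/N)) < 3*r := by
        have := dist_triangle x (γ t) (γ ((k:ℝ)/N))
        linarith
      set v := r⁻¹ • (x - γ ((k:ℝ)/N)) with hv
      have hvball : v ∈ closedBall (0 : EuclideanSpace ℝ (Fin n)) 3 := by
        rw [mem_closedBall, dist_zero_right, hv, norm_smul, Real.norm_eq_abs,
          abs_of_nonneg (inv_nonneg.mpr hr.le), ← dist_eq_norm]
        rw [inv_mul_le_iff₀ hr]
        nlinarith
      obtain ⟨dnet, hdD, hdball⟩ := Set.mem_iUnion₂.mp (hDcov hvball)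
      have hdist_vd : dist v dnet < 1 := by rwa [mem_ball] at hdball
      have hdl : dnet ∈ l := (hmem_l dnet).mpr hdD
      obtain ⟨i, him, hgi⟩ := List.mem_iff_getElem.mp hdl
      rw [← hm] at him
      set j := m * k + i with hjdef
      have hjm : j % m = i := by
        rw [hjdef, Nat.mul_add_mod, Nat.mod_eq_of_lt him]
      have hjd : j / m = k := by
        rw [hjdef, Nat.mul_add_div hmpos, Nat.div_eq_of_lt him, add_zero]
      have hjM : j ≤ (N+1)*m := by
        calc j = m*k + i := rfl
          _ ≤ m*N + m := add_le_add (Nat.mul_le_mul_left m hkN) him.le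
          _ = (N+1)*m := by ring
      have hqj : q j = γ ((k:ℝ)/N) + r • dnet := by
        rw [hq_def]
        simp only [hjm, hjd, min_eq_left hkN]
        congr 2
        rw [List.getD_eq_getElem l 0 (by rw [← hm]; exact him)]
        exact hgi
      have hxq : dist x (q j) ≤ r := by
        rw [hqj, dist_eq_norm]
        have hrw : x - (γ ((k:ℝ)/N) + r • dnet) = r • (v - dnet) := by
          rw [hv, smul_sub, smul_inv_smul₀ (ne_of_gt hr)]
          abel
        rw [hrw, norm_smul, Real.norm_eq_abs, abs_of_nonneg hr.le, ← dist_eq_norm]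
        nlinarith
      exact le_trans (infDist_le_dist_of_mem (himg j hjM)) hxq
    have hmdp : MDPlen (nbhd (γ '' Set.Icc 0 1) r) r ≤ eVariationOn φ (Set.Icc 0 1) :=
      iInf_le_of_le φ (iInf_le_of_le hKex (iInf_le_of_le hcov le_rfl))
    refine le_trans hmdp (le_trans hvar (ENNReal.ofReal_le_ofReal ?_))
    -- real arithmetic
    have hmR : (0:ℝ) < (m:ℝ) := by exact_mod_cast hmpos
    have hA : (N:ℝ) + 1 ≤ 3 * ((Cγ/r)^(α⁻¹)) := by
      have hce : (N:ℝ) < (Cγ/r)^(α⁻¹) + 1 := Nat.ceil_lt_add_one (by positivity)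
      linarith
    have expand : (Cγ/r)^(α⁻¹) = Cγ^(α⁻¹) * (r^(α⁻¹))⁻¹ := by
      rw [Real.div_rpow hCpos.le hr.le, div_eq_mul_inv]
    have hrpowα : r ^ ((α-1)/α) = r * (r ^ (α⁻¹))⁻¹ := by
      rw [show (α-1)/α = 1 + (-α⁻¹) by field_simp; ring, Real.rpow_add hr,
        Real.rpow_one, Real.rpow_neg hr.le]
    have hcast : ((((N+1)*m : ℕ)):ℝ) = ((N:ℝ)+1)*(m:ℝ) := by push_cast; ring
    rw [hcast, hrpowα]
    calc ((N:ℝ)+1)*(m:ℝ)*(7*r) ≤ (3*((Cγ/r)^(α⁻¹)))*(m:ℝ)*(7*r) := by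
          apply mul_le_mul_of_nonneg_right
            (mul_le_mul_of_nonneg_right hA (by positivity)) (by positivity)
      _ = 21*(m:ℝ)*Cγ^(α⁻¹) * (r * (r^(α⁻¹))⁻¹) := by rw [expand]; ring
      _ ≤ C * (r * (r^(α⁻¹))⁻¹) := by
          apply mul_le_mul_of_nonneg_right hC2 (by positivity)
end

section
/- For every compact set E ⊂ ℝⁿ and r > 0, there exists a Lipschitz curve φ* : [0,1] → ℝⁿ such that E ⊆ B(φ*([0,1]), r) and ℓ(φ*) = Λ̂(E, r) := inf{ℓ(φ) : φ Lipschitz, E ⊆ B(φ([0,1]), r)}, provided the infimum is finite; i.e., the parameterized Maximum Distance Problem admits a minimizer. -/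
set_option synthInstance.maxHeartbeats 1000000

open MeasureTheory Metric Set ENNReal
open scoped NNReal BoundedContinuousFunction

lemma mdp_lip_weaken {α β : Type*} [PseudoEMetricSpace α] [PseudoEMetricSpace β]
    {K K' : NNReal} {f : α → β} {s : Set α} (h : LipschitzOnWith K f s) (hK : K ≤ K') :
    LipschitzOnWith K' f s :=
  fun _ hx _ hy => (h hx hy).trans (mul_le_mul_left (ENNReal.coe_le_coe.2 hK) _)

/-- Variation bound for a Lipschitz function on an interval. -/
lemma mdp_evar_le_of_lip {X : Type*} [PseudoEMetricSpace X] {f : ℝ → X} {C : ℝ≥0} {a b : ℝ}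
    (hab : a ≤ b) (h : LipschitzOnWith C f (Set.Icc a b)) :
    eVariationOn f (Set.Icc a b) ≤ (C : ℝ≥0∞) * ENNReal.ofReal (b - a) := by
  have h1 : eVariationOn (f ∘ id) (Set.Icc a b) ≤ (C : ℝ≥0∞) * eVariationOn id (Set.Icc a b) :=
    h.comp_eVariationOn_le (Set.mapsTo_id _)
  have h2 : eVariationOn id (Set.Icc a b ∩ Set.Icc a b) ≤ ENNReal.ofReal (b - a) :=
    MonotoneOn.eVariationOn_le (monotoneOn_id (s := Set.Icc a b))
      (Set.left_mem_Icc.2 hab) (Set.right_mem_Icc.2 hab)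
  rw [Set.inter_self] at h2
  calc eVariationOn f (Set.Icc a b) = eVariationOn (f ∘ id) (Set.Icc a b) := by
        rw [Function.comp_id]
    _ ≤ (C : ℝ≥0∞) * eVariationOn id (Set.Icc a b) := h1
    _ ≤ (C : ℝ≥0∞) * ENNReal.ofReal (b - a) := mul_le_mul_right h2 _

/-- Constant-speed reparametrization of a Lipschitz curve on `[0,1]`. -/
lemma mdp_exists_reparam {X : Type*} [MetricSpace X] {φ : ℝ → X} {K : ℝ≥0}
    (hK : LipschitzOnWith K φ (Set.Icc 0 1)) :
    ∃ ψ : ℝ → X,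
      LipschitzOnWith (eVariationOn φ (Set.Icc 0 1)).toReal.toNNReal ψ (Set.Icc 0 1) ∧
      φ '' Set.Icc 0 1 ⊆ ψ '' Set.Icc 0 1 ∧
      eVariationOn ψ (Set.Icc 0 1) ≤ eVariationOn φ (Set.Icc 0 1) := by
  set s : Set ℝ := Set.Icc 0 1 with hs
  have h01 : (0 : ℝ) ≤ 1 := zero_le_one
  have h0s : (0 : ℝ) ∈ s := Set.left_mem_Icc.2 h01
  have h1s : (1 : ℝ) ∈ s := Set.right_mem_Icc.2 h01
  have hlbv : LocallyBoundedVariationOn φ s := hK.locallyBoundedVariationOn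
  set V : ℝ≥0∞ := eVariationOn φ s with hV
  have hVlt : V < ⊤ := by
    refine (mdp_evar_le_of_lip h01 hK).trans_lt ?_
    exact ENNReal.mul_lt_top ENNReal.coe_lt_top ENNReal.ofReal_lt_top
  have hVtop : V ≠ ⊤ := hVlt.ne
  set Vr : ℝ := V.toReal with hVr
  have hVr0 : 0 ≤ Vr := ENNReal.toReal_nonneg
  set v : ℝ → ℝ := variationOnFromTo φ s 0 with hv
  -- increments of v are controlled
  have hincr : ∀ x ∈ s, ∀ y ∈ s, x ≤ y → v y - v x ≤ (K : ℝ) * (y - x) := by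
    intro x hx y hy hxy
    have hadd : v x + variationOnFromTo φ s x y = v y := variationOnFromTo.add hlbv h0s hx hy
    have hsub : s ∩ Set.Icc x y = Set.Icc x y :=
      Set.inter_eq_self_of_subset_right (Set.Icc_subset_Icc hx.1 hy.2)
    have hb : eVariationOn φ (Set.Icc x y) ≤ ENNReal.ofReal ((K : ℝ) * (y - x)) := by
      have h2 := mdp_evar_le_of_lip hxy (hK.mono (Set.Icc_subset_Icc hx.1 hy.2))
      rwa [ENNReal.ofReal_mul K.coe_nonneg, ENNReal.ofReal_coe_nnreal]
    have hto : variationOnFromTo φ s x y ≤ (K : ℝ) * (y - x) := by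
      rw [variationOnFromTo.eq_of_le φ s hxy, hsub]
      exact ENNReal.toReal_le_of_le_ofReal (mul_nonneg K.2 (by linarith)) hb
    linarith
  have hvmono : MonotoneOn v s := variationOnFromTo.monotoneOn hlbv h0s
  have hv0 : v 0 = 0 := variationOnFromTo.self φ s 0
  have hv1 : v 1 = Vr := by
    rw [hv, variationOnFromTo.eq_of_le φ s h01]
    congr 1
    rw [show s ∩ Set.Icc 0 1 = s from Set.inter_self s]
  have hvlip : LipschitzOnWith K v s := by
    rw [lipschitzOnWith_iff_dist_le_mul]
    intro x hx y hy
    rcases le_total x y with hxy | hxy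
    · have h1 := hincr x hx y hy hxy
      have h2 : v x ≤ v y := hvmono hx hy hxy
      rw [Real.dist_eq, Real.dist_eq, abs_of_nonpos (by linarith), abs_of_nonpos (by linarith)]
      linarith
    · have h1 := hincr y hy x hx hxy
      have h2 : v y ≤ v x := hvmono hy hx hxy
      rw [Real.dist_eq, Real.dist_eq, abs_of_nonneg (by linarith), abs_of_nonneg (by linarith)]
      linarith
  have hvcont : ContinuousOn v s := hvlip.continuousOn
  have himg : v '' s = Set.Icc 0 Vr := by
    apply Set.Subset.antisymm
    · rintro _ ⟨t, ht, rfl⟩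
      exact ⟨by rw [← hv0]; exact hvmono h0s ht ht.1, by rw [← hv1]; exact hvmono ht h1s ht.2⟩
    · have := intermediate_value_Icc h01 hvcont
      rwa [hv0, hv1] at this
  set g : ℝ → X := naturalParameterization φ s 0 with hg
  have hus : HasUnitSpeedOn g (v '' s) := has_unit_speed_naturalParameterization φ hlbv h0s
  have hkey : ∀ x ∈ v '' s, ∀ y ∈ v '' s, x ≤ y → edist (g x) (g y) ≤ ENNReal.ofReal (y - x) := by
    intro x hx y hy hxy
    have h1 : edist (g x) (g y) ≤ eVariationOn g ((v '' s) ∩ Set.Icc x y) :=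
      eVariationOn.edist_le g ⟨hx, le_rfl, hxy⟩ ⟨hy, hxy, le_rfl⟩
    rw [hus hx hy] at h1
    simpa using h1
  have hglip : LipschitzOnWith 1 g (v '' s) := by
    intro x hx y hy
    rcases le_total x y with hxy | hxy
    · refine (hkey x hx y hy hxy).trans ?_
      rw [ENNReal.coe_one, one_mul, edist_dist, Real.dist_eq, abs_of_nonpos (by linarith)]
      simp [neg_sub]
    · rw [edist_comm (g x)]
      refine (hkey y hy x hx hxy).trans ?_
      rw [ENNReal.coe_one, one_mul, edist_dist, Real.dist_eq, abs_of_nonneg (by linarith)]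
  have hmem : ∀ z ∈ s, Vr * z ∈ v '' s := by
    intro z hz
    rw [himg]
    refine ⟨mul_nonneg hVr0 hz.1, ?_⟩
    calc Vr * z ≤ Vr * 1 := mul_le_mul_of_nonneg_left hz.2 hVr0
      _ = Vr := mul_one Vr
  have hlip2 : LipschitzOnWith Vr.toNNReal (fun t => g (Vr * t)) s := by
    intro x hx y hy
    have h1 := hglip (hmem x hx) (hmem y hy)
    refine h1.trans ?_
    rw [ENNReal.coe_one, one_mul, edist_dist, edist_dist, Real.dist_eq, Real.dist_eq,
      ← mul_sub, abs_mul, abs_of_nonneg hVr0, ENNReal.ofReal_mul hVr0]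
    rw [show ((Vr.toNNReal : ℝ≥0∞)) = ENNReal.ofReal Vr from rfl]
  refine ⟨fun t => g (Vr * t), hlip2, ?_, ?_⟩
  · -- image inclusion
    rintro _ ⟨t, ht, rfl⟩
    have heq : g (v t) = φ t := by
      have h0 := edist_naturalParameterization_eq_zero hlbv h0s ht
      rwa [edist_eq_zero] at h0
    have hvt : v t ∈ Set.Icc 0 Vr := by rw [← himg]; exact ⟨t, ht, rfl⟩
    by_cases hVz : Vr = 0
    · refine ⟨0, h0s, ?_⟩
      have hz : v t = 0 := le_antisymm (by rw [← hVz]; exact hvt.2) hvt.1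
      simp only [mul_zero, ← heq, hz]
    · have hVpos : 0 < Vr := lt_of_le_of_ne hVr0 (Ne.symm hVz)
      refine ⟨v t / Vr, ⟨div_nonneg hvt.1 hVr0, by rw [div_le_one hVpos]; exact hvt.2⟩, ?_⟩
      show g (Vr * (v t / Vr)) = φ t
      rw [mul_comm, div_mul_cancel₀ _ hVz]
      exact heq
  · -- variation bound
    have := mdp_evar_le_of_lip h01 hlip2
    rw [sub_zero, ENNReal.ofReal_one, mul_one] at this
    refine this.trans ?_
    rw [show ((Vr.toNNReal : ℝ≥0∞)) = ENNReal.ofReal Vr from rfl, hVr,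
      ENNReal.ofReal_toReal hVtop]

open Filter in
/-- The parameterized Maximum Distance Problem admits a minimizer whenever its value
is finite. -/
theorem MDPlen_exists_minimizer {n : ℕ} (E : Set (EuclideanSpace ℝ (Fin n)))
    (hE : IsCompact E) (r : ℝ) (hr : 0 < r) (hfin : MDPlen E r < ⊤) :
    ∃ φ : ℝ → EuclideanSpace ℝ (Fin n),
      (∃ K : NNReal, LipschitzOnWith K φ (Set.Icc 0 1)) ∧
      E ⊆ nbhd (φ '' Set.Icc 0 1) r ∧
      eVariationOn φ (Set.Icc 0 1) = MDPlen E r := by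
  classical
  have h01 : (0 : ℝ) ≤ 1 := zero_le_one
  have h0s : (0 : ℝ) ∈ Set.Icc (0:ℝ) 1 := Set.left_mem_Icc.2 h01
  rcases E.eq_empty_or_nonempty with rfl | ⟨x0, hx0⟩
  · -- empty case : the constant curve is a minimizer
    have hzero : eVariationOn (fun _ : ℝ => (0 : EuclideanSpace ℝ (Fin n))) (Set.Icc 0 1) = 0 :=
      eVariationOn.constant_on (by rintro x ⟨a, -, rfl⟩ y ⟨b, -, rfl⟩; rfl)
    have hlip : LipschitzOnWith 0 (fun _ : ℝ => (0 : EuclideanSpace ℝ (Fin n))) (Set.Icc 0 1) :=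
      fun x _ y _ => by simp
    have hle : MDPlen (∅ : Set (EuclideanSpace ℝ (Fin n))) r ≤
        eVariationOn (fun _ : ℝ => (0 : EuclideanSpace ℝ (Fin n))) (Set.Icc 0 1) :=
      iInf_le_of_le _ (iInf_le_of_le ⟨0, hlip⟩ (iInf_le _ (Set.empty_subset _)))
    rw [hzero] at hle
    exact ⟨_, ⟨0, hlip⟩, Set.empty_subset _, by
      rw [hzero]; exact (le_antisymm hle zero_le).symm⟩
  · have hLtop : MDPlen E r ≠ ⊤ := hfin.ne
    set ε : ℕ → ℝ≥0∞ := fun k => ((k : ℝ≥0∞) + 1)⁻¹ with hεdef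
    have hεpos : ∀ k, ε k ≠ 0 := fun k =>
      ENNReal.inv_ne_zero.mpr (ENNReal.add_ne_top.2 ⟨ENNReal.natCast_ne_top k, ENNReal.one_ne_top⟩)
    have hεle1 : ∀ k, ε k ≤ 1 := fun k => ENNReal.inv_le_one.2 le_add_self
    have hεanti : Antitone ε := fun a b hab =>
      ENNReal.inv_le_inv.2 (add_le_add_left (by exact_mod_cast hab) 1)
    have hεto : Tendsto ε atTop (nhds 0) := by
      have h1 : Tendsto (fun k : ℕ => ((k + 1 : ℕ) : ℝ≥0∞)⁻¹) atTop (nhds 0) :=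
        ENNReal.tendsto_inv_nat_nhds_zero.comp (tendsto_add_atTop_nat 1)
      simpa using h1
    set M : ℝ≥0 := (MDPlen E r + 1).toReal.toNNReal with hMdef
    -- minimizing sequence of uniformly Lipschitz curves
    have key : ∀ k : ℕ, ∃ ψ : ℝ → EuclideanSpace ℝ (Fin n),
        LipschitzOnWith M ψ (Set.Icc 0 1) ∧ E ⊆ nbhd (ψ '' Set.Icc 0 1) r ∧
        eVariationOn ψ (Set.Icc 0 1) < MDPlen E r + ε k := by
      intro k
      have hlt : MDPlen E r < MDPlen E r + ε k := ENNReal.lt_add_right hLtop (hεpos k)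
      conv_lhs at hlt => rw [MDPlen]
      simp only [iInf_lt_iff] at hlt
      obtain ⟨φ0, ⟨K0, hK0⟩, hcov0, hvar0⟩ := hlt
      obtain ⟨ψ, hψlip, hψimg, hψvar⟩ := mdp_exists_reparam hK0
      have hV1 : eVariationOn φ0 (Set.Icc 0 1) ≤ MDPlen E r + 1 :=
        hvar0.le.trans (add_le_add_right (hεle1 k) _)
      refine ⟨ψ, mdp_lip_weaken hψlip (Real.toNNReal_mono
        (ENNReal.toReal_mono (by finiteness) hV1)), ?_, lt_of_le_of_lt hψvar hvar0⟩
      intro x hx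
      refine le_trans (Metric.infDist_le_infDist_of_subset hψimg
        ⟨φ0 0, Set.mem_image_of_mem _ h0s⟩) (hcov0 hx)
    choose ψ hψM hψcov hψvar using key
    have hcont : ∀ k, ContinuousOn (ψ k) (Set.Icc 0 1) := fun k => (hψM k).continuousOn
    have himgc : ∀ k, IsCompact (ψ k '' Set.Icc 0 1) := fun k =>
      isCompact_Icc.image_of_continuousOn (hcont k)
    have hne : ∀ k, (ψ k '' Set.Icc 0 1).Nonempty := fun k => ⟨_, Set.mem_image_of_mem _ h0s⟩
    set R : ℝ := (M : ℝ) + r with hRdef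
    have hball : ∀ k, ∀ t ∈ Set.Icc (0:ℝ) 1, ψ k t ∈ Metric.closedBall x0 R := by
      intro k t ht
      obtain ⟨y, hy, hyd⟩ := (himgc k).exists_infDist_eq_dist (hne k) x0
      have hdr : dist x0 y ≤ r := by rw [← hyd]; exact hψcov k hx0
      obtain ⟨u, hu, rfl⟩ := hy
      have hd1 : dist (ψ k t) (ψ k u) ≤ (M : ℝ) * dist t u :=
        (lipschitzOnWith_iff_dist_le_mul.mp (hψM k)) t ht u hu
      have hdtu : dist t u ≤ 1 := by
        rw [Real.dist_eq]
        exact abs_le.2 ⟨by linarith [ht.1, hu.2], by linarith [ht.2, hu.1]⟩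
      rw [Metric.mem_closedBall]
      calc dist (ψ k t) x0 ≤ dist (ψ k t) (ψ k u) + dist (ψ k u) x0 := dist_triangle _ _ _
        _ ≤ (M : ℝ) * dist t u + r := add_le_add hd1 (by rwa [dist_comm] at hdr)
        _ ≤ (M : ℝ) * 1 + r := add_le_add_left
            (mul_le_mul_of_nonneg_left hdtu M.coe_nonneg) r
        _ = R := by rw [mul_one]
    -- package as bounded continuous functions and apply Arzelà–Ascoli
    let F : ℕ → (↥(Set.Icc (0:ℝ) 1) →ᵇ EuclideanSpace ℝ (Fin n)) := fun k =>
      BoundedContinuousFunction.mkOfCompact ⟨fun t => ψ k t, (hcont k).restrict⟩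
    set A : Set (↥(Set.Icc (0:ℝ) 1) →ᵇ EuclideanSpace ℝ (Fin n)) :=
      {f | LipschitzWith M f ∧ ∀ x, f x ∈ Metric.closedBall x0 R} with hAdef
    have hAclosed : IsClosed A := by
      have h1 : IsClosed {f : ↥(Set.Icc (0:ℝ) 1) →ᵇ EuclideanSpace ℝ (Fin n) |
          LipschitzWith M f} := by
        simp only [lipschitzWith_iff_dist_le_mul, Set.setOf_forall]
        exact isClosed_iInter fun x => isClosed_iInter fun y =>
          isClosed_le (Continuous.dist (continuous_eval_const _)
            (continuous_eval_const _)) continuous_const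
      have h2 : IsClosed {f : ↥(Set.Icc (0:ℝ) 1) →ᵇ EuclideanSpace ℝ (Fin n) |
          ∀ x, f x ∈ Metric.closedBall x0 R} := by
        rw [Set.setOf_forall]
        exact isClosed_iInter fun x =>
          IsClosed.preimage (continuous_eval_const _)
            Metric.isClosed_closedBall
      exact h1.inter h2
    have hAcomp : IsCompact A := by
      refine BoundedContinuousFunction.arzela_ascoli₂ (Metric.closedBall x0 R)
        (isCompact_closedBall x0 R) A hAclosed (fun f x hf => hf.2 x) ?_
      refine Metric.equicontinuous_of_continuity_modulus (fun d => (M : ℝ) * d) ?_ _ ?_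
      · have h6 : Filter.Tendsto (fun d : ℝ => (M : ℝ) * d) (nhds 0) (nhds ((M : ℝ) * 0)) :=
          (continuous_const.mul continuous_id).tendsto 0
        simpa using h6
      · intro x y f
        exact f.2.1.dist_le_mul x y
    have hFA : ∀ k, F k ∈ A := by
      intro k
      refine ⟨?_, fun x => hball k x x.2⟩
      exact lipschitzOnWith_iff_restrict.mp (hψM k)
    obtain ⟨G, hGA, σ, hσmono, hσtend⟩ := hAcomp.tendsto_subseq hFA
    set φs : ℝ → EuclideanSpace ℝ (Fin n) := fun t => G (Set.projIcc 0 1 h01 t) with hφsdef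
    have hφlipW : LipschitzWith M φs :=
      (hGA.1.comp (LipschitzWith.projIcc h01)).weaken (le_of_eq (mul_one M))
    have hpt : ∀ t ∈ Set.Icc (0:ℝ) 1,
        Tendsto (fun k => ψ (σ k) t) atTop (nhds (φs t)) := by
      intro t ht
      have h2 := ((continuous_eval_const
        (x := (⟨t, ht⟩ : ↥(Set.Icc (0:ℝ) 1)))).tendsto G).comp hσtend
      have h3 : φs t = G ⟨t, ht⟩ := by rw [hφsdef]; simp [Set.projIcc_of_mem h01 ht]
      rw [h3]
      exact h2
    have hdist0 : Tendsto (fun k => dist (F (σ k)) G) atTop (nhds 0) := by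
      have := tendsto_iff_dist_tendsto_zero.mp hσtend
      exact this
    have hcov : E ⊆ nbhd (φs '' Set.Icc 0 1) r := by
      intro x hx
      show Metric.infDist x (φs '' Set.Icc 0 1) ≤ r
      have hstep : ∀ k, Metric.infDist x (φs '' Set.Icc 0 1) ≤ r + dist (F (σ k)) G := by
        intro k
        obtain ⟨y, hy, hyd⟩ := (himgc (σ k)).exists_infDist_eq_dist (hne (σ k)) x
        obtain ⟨u, hu, rfl⟩ := hy
        have h1 : dist x (ψ (σ k) u) ≤ r := by rw [← hyd]; exact hψcov (σ k) hx
        have h2 : dist (ψ (σ k) u) (φs u) ≤ dist (F (σ k)) G := by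
          have h4 := BoundedContinuousFunction.dist_coe_le_dist
            (f := F (σ k)) (g := G) (⟨u, hu⟩ : ↥(Set.Icc (0:ℝ) 1))
          have h5 : φs u = G ⟨u, hu⟩ := by rw [hφsdef]; simp [Set.projIcc_of_mem h01 hu]
          rw [h5]
          exact h4
        calc Metric.infDist x (φs '' Set.Icc 0 1) ≤ dist x (φs u) :=
            Metric.infDist_le_dist_of_mem (Set.mem_image_of_mem _ hu)
          _ ≤ dist x (ψ (σ k) u) + dist (ψ (σ k) u) (φs u) := dist_triangle _ _ _
          _ ≤ r + dist (F (σ k)) G := add_le_add h1 h2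
      have hlim : Tendsto (fun k => r + dist (F (σ k)) G) atTop (nhds (r + 0)) :=
        tendsto_const_nhds.add hdist0
      rw [add_zero] at hlim
      exact ge_of_tendsto hlim (Filter.Eventually.of_forall hstep)
    have hadm : MDPlen E r ≤ eVariationOn φs (Set.Icc 0 1) :=
      iInf_le_of_le φs (iInf_le_of_le ⟨M, hφlipW.lipschitzOnWith (s := Set.Icc (0:ℝ) 1)⟩ (iInf_le _ hcov))
    have hub : eVariationOn φs (Set.Icc 0 1) ≤ MDPlen E r := by
      by_contra hcon
      push_neg at hcon
      obtain ⟨w, hw1, hw2⟩ := exists_between hcon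
      have hev1 : ∀ᶠ k in atTop, w < eVariationOn (fun t => ψ (σ k) t) (Set.Icc 0 1) :=
        eVariationOn.lowerSemicontinuous_aux (F := fun k => ψ (σ k)) hpt hw2
      have hδpos : (0 : ℝ≥0∞) < w - MDPlen E r := tsub_pos_of_lt hw1
      have hδadd : MDPlen E r + (w - MDPlen E r) = w := by
        rw [add_comm]; exact tsub_add_cancel_of_le hw1.le
      have hev2 : ∀ᶠ k in atTop, ε k < w - MDPlen E r := hεto.eventually_lt_const hδpos
      obtain ⟨k, hk1, hk2⟩ := (hev1.and hev2).exists
      have h3 : eVariationOn (ψ (σ k)) (Set.Icc 0 1) < MDPlen E r + ε (σ k) := hψvar (σ k)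
      have h4 : ε (σ k) ≤ ε k := hεanti hσmono.le_apply
      have hfalse : w < w := hk1.trans (h3.trans_le (by
        calc MDPlen E r + ε (σ k) ≤ MDPlen E r + ε k := add_le_add_right h4 _
          _ ≤ MDPlen E r + (w - MDPlen E r) := add_le_add_right hk2.le _
          _ = w := hδadd))
      exact lt_irrefl _ hfalse
    exact ⟨φs, ⟨M, hφlipW.lipschitzOnWith (s := Set.Icc (0:ℝ) 1)⟩, hcov, le_antisymm hub hadm⟩
end

section
/- Let E ⊂ ℝⁿ be path connected and compact, r > 0, and let Γ be a compact connected set with E ⊆ B(Γ, r) (so in particular E ⊆ B(Γ*, r) holds for any r-maximum distance minimizer Γ* of B(E, r)). Suppose x₀, x₁ ∈ Γ ∩ B(E, 2r). Then there exists a finite sequence of points x₂, …, x_N ∈ Γ ∩ B(E, 2r) such that, after setting x_{N+1} := x₀, one has |x_j − x_{j+1}| ≤ 4r for all j = 1, …, N. -/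
open MeasureTheory Metric Set ENNReal

/-- Chain lemma: two points of `Γ ∩ B(E,2r)` can be joined by a cyclic chain of points
of `Γ ∩ B(E,2r)` with consecutive gaps at most `4r`. -/
theorem chain_lemma {n : ℕ} (E Γ : Set (EuclideanSpace ℝ (Fin n)))
    (hE : IsCompact E) (hEpc : IsPathConnected E) (hΓ : IsCompact Γ)
    (r : ℝ) (hr : 0 < r) (hcov : E ⊆ nbhd Γ r)
    (x₀ x₁ : EuclideanSpace ℝ (Fin n))
    (hx₀ : x₀ ∈ Γ ∩ nbhd E (2 * r)) (hx₁ : x₁ ∈ Γ ∩ nbhd E (2 * r)) :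
    ∃ (N : ℕ) (x : ℕ → EuclideanSpace ℝ (Fin n)),
      1 ≤ N ∧ x 0 = x₀ ∧ x 1 = x₁ ∧ x (N + 1) = x₀ ∧
      (∀ j, 2 ≤ j → j ≤ N → x j ∈ Γ ∩ nbhd E (2 * r)) ∧
      (∀ j, 1 ≤ j → j ≤ N → dist (x j) (x (j + 1)) ≤ 4 * r) := by

  obtain ⟨hx₀Γ, hx₀E⟩ := hx₀
  obtain ⟨hx₁Γ, hx₁E⟩ := hx₁
  have hEne : E.Nonempty := ⟨hEpc.choose, hEpc.choose_spec.1⟩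
  have hΓne : Γ.Nonempty := ⟨x₀, hx₀Γ⟩
  obtain ⟨e₀, he₀E, he₀⟩ := hE.exists_infDist_eq_dist hEne x₀
  obtain ⟨e₁, he₁E, he₁⟩ := hE.exists_infDist_eq_dist hEne x₁
  have hd₀ : dist x₀ e₀ ≤ 2 * r := he₀ ▸ hx₀E
  have hd₁ : dist x₁ e₁ ≤ 2 * r := he₁ ▸ hx₁E
  obtain ⟨γ, hγ⟩ := (hEpc.joinedIn e₁ he₁E e₀ he₀E)
  have hmem : ∀ s : ℝ, γ.extend s ∈ E := by
    intro s
    rw [Path.extend, ContinuousMap.coe_mk, Set.IccExtend_apply]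
    exact hγ _
  have hc : ContinuousOn γ.extend (Set.Icc 0 1) := γ.continuous_extend.continuousOn
  have huc := isCompact_Icc.uniformContinuousOn_of_continuous hc
  rw [Metric.uniformContinuousOn_iff_le] at huc
  obtain ⟨δ, hδ, hδ'⟩ := huc r hr
  obtain ⟨k, hk⟩ := exists_nat_one_div_lt hδ
  set m : ℕ := k + 1 with hm
  have hm0 : (0:ℝ) < m := by positivity
  set t : ℕ → ℝ := fun i => i / m with ht
  have htmem : ∀ i : ℕ, i ≤ m → t i ∈ Set.Icc (0:ℝ) 1 := by
    intro i hi
    constructor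
    · positivity
    · rw [div_le_one hm0]
      exact_mod_cast hi
  have hstep : ∀ i : ℕ, i + 1 ≤ m →
      dist (γ.extend (t i)) (γ.extend (t (i + 1))) ≤ r := by
    intro i hi
    apply hδ' _ (htmem i (Nat.le_of_succ_le hi)) _ (htmem (i+1) hi)
    have h1 : dist (t i) (t (i+1)) = 1 / m := by
      rw [Real.dist_eq, ht]
      push_cast
      rw [abs_of_nonpos]
      · field_simp; ring
      · rw [sub_nonpos]
        gcongr
        linarith
    have hlt : (1:ℝ)/m < δ := by rw [hm]; push_cast; exact hk
    rw [h1]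
    exact hlt.le
  have hy : ∀ i : ℕ, ∃ yi ∈ Γ, dist (γ.extend (t i)) yi ≤ r := by
    intro i
    obtain ⟨yi, hyiΓ, hyi⟩ := hΓ.exists_infDist_eq_dist hΓne (γ.extend (t i))
    exact ⟨yi, hyiΓ, hyi ▸ hcov (hmem (t i))⟩
  choose y hyΓ hyd using hy
  set x : ℕ → EuclideanSpace ℝ (Fin n) := fun j =>
    if j = 0 then x₀ else if j = 1 then x₁ else if j ≤ m + 2 then y (j - 2) else x₀
    with hx
  have hxval : ∀ j, 2 ≤ j → j ≤ m + 2 → x j = y (j - 2) := by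
    intro j h2 hle
    simp only [hx]
    rw [if_neg (by omega), if_neg (by omega), if_pos hle]
  have hxlast : ∀ j, m + 2 < j → x j = x₀ := by
    intro j hgt
    simp only [hx]
    rw [if_neg (by omega), if_neg (by omega), if_neg (by omega)]
  have hx0 : x 0 = x₀ := by simp [hx]
  have hx1 : x 1 = x₁ := by simp [hx]
  refine ⟨m + 2, x, by omega, hx0, hx1, hxlast _ (by omega), ?_, ?_⟩
  · intro j hj2 hjN
    rw [hxval j hj2 hjN]
    refine ⟨hyΓ _, ?_⟩
    show infDist (y (j-2)) E ≤ 2 * r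
    calc infDist (y (j-2)) E ≤ dist (y (j-2)) (γ.extend (t (j-2))) :=
          infDist_le_dist_of_mem (hmem _)
      _ ≤ r := by rw [dist_comm]; exact hyd _
      _ ≤ 2 * r := by linarith
  · intro j hj1 hjN
    rcases eq_or_lt_of_le hj1 with h1 | h1
    · -- j = 1 : x₁ to y 0
      have h0 : t 0 = 0 := by simp [ht]
      have he : γ.extend (t 0) = e₁ := by rw [h0, Path.extend_zero]
      rw [← h1, hx1]
      show dist x₁ (x 2) ≤ 4 * r
      rw [hxval 2 le_rfl (by omega)]
      calc dist x₁ (y (2-2)) ≤ dist x₁ e₁ + dist e₁ (y 0) := dist_triangle _ _ _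
        _ ≤ 2 * r + r := by
            refine add_le_add hd₁ ?_
            rw [← he]; exact hyd 0
        _ ≤ 4 * r := by linarith
    · rcases eq_or_lt_of_le hjN with hN | hN
      · -- j = m + 2 : y m to x₀
        have h1' : t m = 1 := by
          simp only [ht]; field_simp
        have he : γ.extend (t m) = e₀ := by rw [h1', Path.extend_one]
        have hidx : m + 2 - 2 = m := by omega
        rw [hN, hxval (m+2) (by omega) le_rfl, hidx, hxlast (m+2+1) (by omega)]
        calc dist (y m) x₀ ≤ dist (y m) e₀ + dist e₀ x₀ := dist_triangle _ _ _
          _ ≤ r + 2 * r := by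
              refine add_le_add ?_ (by rw [dist_comm]; exact hd₀)
              rw [dist_comm, ← he]; exact hyd m
          _ ≤ 4 * r := by linarith
      · -- 2 ≤ j < m + 2
        have hidx : j + 1 - 2 = j - 2 + 1 := by omega
        rw [hxval j (by omega) (by omega), hxval (j+1) (by omega) (by omega), hidx]
        set i := j - 2 with hi
        have hile : i + 1 ≤ m := by omega
        calc dist (y i) (y (i+1))
            ≤ dist (y i) (γ.extend (t i)) + dist (γ.extend (t i)) (γ.extend (t (i+1)))
              + dist (γ.extend (t (i+1))) (y (i+1)) := dist_triangle4 _ _ _ _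
          _ ≤ r + r + r := by
              refine add_le_add (add_le_add ?_ (hstep i hile)) (hyd _)
              rw [dist_comm]; exact hyd _
          _ ≤ 4 * r := by linarith
end
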